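/- arXiv:1403.1935 — 5 statements merged into one kernel-verified Lean document; each statement's English description precedes it below -/
import Mathlib

section
/- Let (X,⪯,G) be a G-complete partially ordered G-metric space and let T : X → X be a map such that: (i) T is G-continuous; (ii) T is non-decreasing with respect to ⪯; (iii) there exists x₀ ∈ X with x₀ ⪯ T x₀; (iv) there exist ψ ∈ Ψ and φ ∈ Φ such that for all x, y, z ∈ X with x ⪯ y ⪯ z, ψ(G(Tx,Ty,Tz)) ≤ ψ(M(x,y,z)) − φ(M(x,y,z)). Then T has a fixed point. -/
open Filter Topology Set

/-- A G-metric on a set `X`, valued in `ℝ` (with values in `[0,∞)`). -/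
structure IsGMetric {X : Type*} (G : X → X → X → ℝ) : Prop where
  nonneg : ∀ x y z, 0 ≤ G x y z
  /-- (G1) -/
  eq_zero_of_eq : ∀ x, G x x x = 0
  /-- (G2) -/
  pos_of_ne : ∀ x y, x ≠ y → 0 < G x x y
  /-- (G3) -/
  le_of_ne : ∀ x y z, y ≠ z → G x x y ≤ G x y z
  /-- (G4): invariance under permutations (generated by these two transpositions) -/
  swap_left : ∀ x y z, G x y z = G y x z
  swap_right : ∀ x y z, G x y z = G x z y
  /-- (G5) rectangle inequality -/
  rect : ∀ x y z a, G x y z ≤ G x a a + G a y z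

/-- A sequence `s` G-converges to `x` iff `G x (s n) (s n) → 0`. -/
def GConvergesTo {X : Type*} (G : X → X → X → ℝ) (s : ℕ → X) (x : X) : Prop :=
  Tendsto (fun n => G x (s n) (s n)) atTop (𝓝 0)

/-- A sequence is G-Cauchy. -/
def GCauchy {X : Type*} (G : X → X → X → ℝ) (s : ℕ → X) : Prop :=
  ∀ ε > (0 : ℝ), ∃ N : ℕ, ∀ n ≥ N, ∀ m ≥ N, ∀ l ≥ N, G (s n) (s m) (s l) < ε

/-- `(X, G)` is G-complete. -/
def GComplete {X : Type*} (G : X → X → X → ℝ) : Prop :=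
  ∀ s : ℕ → X, GCauchy G s → ∃ x, GConvergesTo G s x

/-- `T` is G-continuous. -/
def GContinuousMap {X : Type*} (G : X → X → X → ℝ) (T : X → X) : Prop :=
  ∀ (s : ℕ → X) (x : X), GConvergesTo G s x → GConvergesTo G (fun n => T (s n)) (T x)

/-- `(X, ⪯, G)` is regular non-decreasing. -/
def RegularNondecreasing {X : Type*} [PartialOrder X] (G : X → X → X → ℝ) : Prop :=
  ∀ (s : ℕ → X) (x : X), Monotone s → GConvergesTo G s x → ∀ n, s n ≤ x

/-- Membership in the class `Ψ`: continuous, non-decreasing, nonnegative on `[0,∞)`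
and vanishing exactly at `0`. -/
def MemPsi (ψ : ℝ → ℝ) : Prop :=
  ContinuousOn ψ (Ici 0) ∧ MonotoneOn ψ (Ici 0) ∧
    (∀ t ≥ (0 : ℝ), 0 ≤ ψ t) ∧ (∀ t ≥ (0 : ℝ), (ψ t = 0 ↔ t = 0))

/-- Membership in the class `Φ`: lower semicontinuous, nonnegative on `[0,∞)`
and vanishing exactly at `0`. -/
def MemPhi (φ : ℝ → ℝ) : Prop :=
  LowerSemicontinuousOn φ (Ici 0) ∧
    (∀ t ≥ (0 : ℝ), 0 ≤ φ t) ∧ (∀ t ≥ (0 : ℝ), (φ t = 0 ↔ t = 0))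

/-- The quantity `M(x,y,z)` associated with `G` and `T`. -/
noncomputable def Mfun {X : Type*} (G : X → X → X → ℝ) (T : X → X) (x y z : X) : ℝ :=
  max (G x (T x) y) (max (G x (T x) z) (max (G x y z) (max (G y (T y) (T y))
    (max (G z (T z) (T z)) ((G x (T y) (T z) + G (T x) y z) / 2)))))

/-- The quantity `N(x,y)` associated with `G` and `T`. -/
noncomputable def Nfun {X : Type*} (G : X → X → X → ℝ) (T : X → X) (x y : X) : ℝ :=
  max (G x (T x) y) (max (G (T x) (T (T x)) (T (T x)))
    (max ((G x (T x) (T x) + G y (T y) (T y)) / 2)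
      ((G x (T (T x)) (T y) + G (T x) (T x) y) / 2)))

section AuxG

variable {X : Type*} {G : X → X → X → ℝ}

lemma gcycle (hG : IsGMetric G) (x y z : X) : G x y z = G y z x := by
  rw [hG.swap_left, hG.swap_right]

lemma gyyx (hG : IsGMetric G) (x y : X) : G x y y = G y y x := gcycle hG x y y

lemma gbaa (hG : IsGMetric G) (a b : X) : G a a b = G b a a := by
  rw [gcycle hG, hG.swap_left]

lemma gaab_le (hG : IsGMetric G) (a b : X) : G a a b ≤ 2 * G b b a := by
  have h := hG.rect a a b b
  have h1 : G a b b = G b b a := gyyx hG a b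
  have h2 : G b a b = G b b a := hG.swap_right b a b
  linarith

lemma gpos (hG : IsGMetric G) {x y : X} (h : x ≠ y) : 0 < G x y y := by
  rw [gyyx hG]; exact hG.pos_of_ne y x h.symm

/-- forward consecutive gap -/
noncomputable def dd (G : X → X → X → ℝ) (s : ℕ → X) (n : ℕ) : ℝ :=
  G (s n) (s (n+1)) (s (n+1))

/-- two-index gap -/
noncomputable def AA (G : X → X → X → ℝ) (s : ℕ → X) (n m : ℕ) : ℝ :=
  G (s n) (s m) (s m)

variable (s : ℕ → X)

lemma rev_le (hG : IsGMetric G) (n : ℕ) :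
    G (s (n+1)) (s n) (s n) ≤ 2 * dd G s n := by
  have e1 : G (s (n+1)) (s n) (s n) = G (s n) (s n) (s (n+1)) := gyyx hG _ _
  have e2 := gaab_le hG (s n) (s (n+1))
  have e3 : G (s (n+1)) (s (n+1)) (s n) = G (s n) (s (n+1)) (s (n+1)) := gbaa hG _ _
  simp only [dd]; linarith

lemma AA_left1 (hG : IsGMetric G) (n m : ℕ) :
    AA G s n m ≤ dd G s n + AA G s (n+1) m := by
  have := hG.rect (s n) (s m) (s m) (s (n+1))
  simp only [dd, AA]; linarith

lemma AA_left2 (hG : IsGMetric G) (n m : ℕ) :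
    AA G s (n+1) m ≤ 2 * dd G s n + AA G s n m := by
  have h1 := hG.rect (s (n+1)) (s m) (s m) (s n)
  have h2 := rev_le s hG n
  simp only [dd, AA] at *; linarith

lemma AA_right1 (hG : IsGMetric G) (n m : ℕ) :
    AA G s n (m+1) ≤ AA G s n m + dd G s m := by
  have := hG.rect (s n) (s (m+1)) (s (m+1)) (s m)
  simp only [dd, AA]; linarith

lemma AA_right2 (hG : IsGMetric G) (n m : ℕ) :
    AA G s n m ≤ AA G s n (m+1) + 2 * dd G s m := by
  have h1 := hG.rect (s n) (s m) (s m) (s (m+1))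
  have h2 := rev_le s hG m
  simp only [dd, AA] at *; linarith

lemma BB_le (hG : IsGMetric G) {m : ℕ} (hm : s (m+1) ≠ s m) (n : ℕ) :
    G (s n) (s n) (s m) ≤ AA G s n m + 2 * dd G s m := by
  have h1 := hG.le_of_ne (s n) (s m) (s (m+1)) hm.symm
  have h2 := hG.rect (s n) (s m) (s (m+1)) (s m)
  have h3 := gaab_le hG (s m) (s (m+1))
  have h4 : G (s (m+1)) (s (m+1)) (s m) = G (s m) (s (m+1)) (s (m+1)) := gbaa hG _ _
  simp only [dd, AA]; linarith

lemma comp1_le (hG : IsGMetric G) {m : ℕ} (hm : s (m+1) ≠ s m) (n : ℕ) :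
    G (s n) (s (n+1)) (s m) ≤ AA G s n m + 3 * dd G s n + 2 * dd G s m := by
  have h1 := hG.rect (s n) (s (n+1)) (s m) (s (n+1))
  have h2 := BB_le s hG hm (n+1)
  have h3 := AA_left2 s hG n m
  simp only [dd, AA] at *; linarith

lemma M_ge (T : X → X) (n m : ℕ) :
    AA G s n m ≤ Mfun G T (s n) (s m) (s m) :=
  le_max_of_le_right (le_max_of_le_right (le_max_left _ _))

lemma M_le (hG : IsGMetric G) (T : X → X) (hst : ∀ k, s (k+1) = T (s k))
    {m : ℕ} (hm : s (m+1) ≠ s m) (n : ℕ) :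
    Mfun G T (s n) (s m) (s m) ≤ AA G s n m + 3 * dd G s n + 2 * dd G s m := by
  have e1 : T (s n) = s (n+1) := (hst n).symm
  have e2 : T (s m) = s (m+1) := (hst m).symm
  have c1 := comp1_le s hG hm n
  have c6a := AA_right1 s hG n m
  have c6b := AA_left2 s hG n m
  have hAnn : (0:ℝ) ≤ AA G s n m := hG.nonneg _ _ _
  have hdn : (0:ℝ) ≤ dd G s n := hG.nonneg _ _ _
  have hdm : (0:ℝ) ≤ dd G s m := hG.nonneg _ _ _
  unfold Mfun
  rw [e1, e2]
  simp only [max_le_iff]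
  refine ⟨?_, ?_, ?_, ?_, ?_, ?_⟩ <;> (simp only [dd, AA] at *; linarith)

lemma MA_le (hG : IsGMetric G) (T : X → X) (hst : ∀ k, s (k+1) = T (s k)) (n : ℕ) :
    Mfun G T (s n) (s (n+1)) (s (n+1)) ≤ max (dd G s n) (dd G s (n+1)) := by
  have e1 : T (s n) = s (n+1) := (hst n).symm
  have e2 : T (s (n+1)) = s (n+1+1) := (hst (n+1)).symm
  have h0 : G (s (n+1)) (s (n+1)) (s (n+1)) = 0 := hG.eq_zero_of_eq _
  have hrect := hG.rect (s n) (s (n+1+1)) (s (n+1+1)) (s (n+1))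
  have l1 : dd G s n ≤ max (dd G s n) (dd G s (n+1)) := le_max_left _ _
  have l2 : dd G s (n+1) ≤ max (dd G s n) (dd G s (n+1)) := le_max_right _ _
  unfold Mfun
  rw [e1, e2]
  simp only [max_le_iff]
  refine ⟨?_, ?_, ?_, ?_, ?_, ?_⟩ <;> (simp only [dd] at *; linarith)

lemma MA_ge1 (T : X → X) (hst : ∀ k, s (k+1) = T (s k)) (n : ℕ) :
    dd G s n ≤ Mfun G T (s n) (s (n+1)) (s (n+1)) := by
  have e1 : T (s n) = s (n+1) := (hst n).symm
  unfold Mfun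
  rw [e1]
  exact le_max_left _ _

lemma MA_ge2 (T : X → X) (hst : ∀ k, s (k+1) = T (s k)) (n : ℕ) :
    dd G s (n+1) ≤ Mfun G T (s n) (s (n+1)) (s (n+1)) := by
  have e2 : T (s (n+1)) = s (n+1+1) := (hst (n+1)).symm
  unfold Mfun
  rw [e2]
  exact le_max_of_le_right (le_max_of_le_right (le_max_of_le_right (le_max_left _ _)))

lemma glim_unique (hG : IsGMetric G) {t : ℕ → X} {p q : X}
    (hp : GConvergesTo G t p) (hq : GConvergesTo G t q) : p = q := by
  by_contra hne
  have hpos : 0 < G p q q := gpos hG hne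
  have hb : ∀ n, G p q q ≤ G p (t n) (t n) + 2 * G q (t n) (t n) := by
    intro n
    have h1 := hG.rect p q q (t n)
    have h2 : G (t n) q q ≤ 2 * G q (t n) (t n) := by
      have h3 := gaab_le hG q (t n)
      have e1 : G (t n) q q = G q q (t n) := gyyx hG (t n) q
      have e2 : G (t n) (t n) q = G q (t n) (t n) := gbaa hG (t n) q
      linarith
    linarith
  have hlim : Tendsto (fun n => G p (t n) (t n) + 2 * G q (t n) (t n)) atTop (𝓝 0) := by
    have := hp.add (hq.const_mul 2)
    simpa using this
  have := ge_of_tendsto' hlim hb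
  linarith

end AuxG

lemma psi_phi_limit {ψ φ : ℝ → ℝ} (hψ : MemPsi ψ) (hφ : MemPhi φ)
    (u v : ℕ → ℝ) (r : ℝ) (hr : 0 ≤ r) (hu0 : ∀ n, 0 ≤ u n) (hv0 : ∀ n, 0 ≤ v n)
    (hu : Tendsto u atTop (𝓝 r)) (hv : Tendsto v atTop (𝓝 r))
    (hineq : ∀ n, ψ (u n) ≤ ψ (v n) - φ (v n)) : r = 0 := by
  have hrmem : r ∈ Ici (0:ℝ) := hr
  have huw : Tendsto u atTop (𝓝[Ici 0] r) :=
    tendsto_nhdsWithin_of_tendsto_nhds_of_eventually_within _ hu (Eventually.of_forall hu0)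
  have hvw : Tendsto v atTop (𝓝[Ici 0] r) :=
    tendsto_nhdsWithin_of_tendsto_nhds_of_eventually_within _ hv (Eventually.of_forall hv0)
  have hψu : Tendsto (fun n => ψ (u n)) atTop (𝓝 (ψ r)) := Tendsto.comp (hψ.1 r hrmem) huw
  have hψv : Tendsto (fun n => ψ (v n)) atTop (𝓝 (ψ r)) := Tendsto.comp (hψ.1 r hrmem) hvw
  have hφr : φ r ≤ 0 := by
    by_contra hc
    push_neg at hc
    have hlsc := hφ.1 r hrmem (φ r / 2) (by linarith)
    have hev : ∀ᶠ n in atTop, φ r / 2 < φ (v n) := hvw.eventually hlsc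
    have hle : (fun n => ψ (u n) + φ r / 2) ≤ᶠ[atTop] fun n => ψ (v n) := by
      filter_upwards [hev] with n hn
      have := hineq n
      linarith
    have := le_of_tendsto_of_tendsto (hψu.add tendsto_const_nhds) hψv hle
    linarith
  have hnn := hφ.2.1 r hr
  exact (hφ.2.2 r hr).mp (le_antisymm hφr hnn)

theorem stmt0 {X : Type*} [Nonempty X] [PartialOrder X] (G : X → X → X → ℝ)
    (hG : IsGMetric G) (hcomp : GComplete G) (T : X → X)
    (hTcont : GContinuousMap G T) (hTmono : Monotone T)
    (x₀ : X) (hx₀ : x₀ ≤ T x₀)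
    (ψ φ : ℝ → ℝ) (hψ : MemPsi ψ) (hφ : MemPhi φ)
    (hcontr : ∀ x y z : X, x ≤ y → y ≤ z →
      ψ (G (T x) (T y) (T z)) ≤ ψ (Mfun G T x y z) - φ (Mfun G T x y z)) :
    ∃ x : X, T x = x := by
  classical
  set s : ℕ → X := fun n => T^[n] x₀ with hs
  have hstep : ∀ n, s (n + 1) = T (s n) := fun n => Function.iterate_succ_apply' T n x₀
  have hsucc : ∀ n, s n ≤ s (n + 1) := by
    intro n
    induction n with
    | zero =>
      have h0 : s 0 = x₀ := rfl
      rw [hstep 0]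
      rw [h0]
      exact hx₀
    | succ n ih =>
      have := hTmono ih
      rwa [← hstep n, ← hstep (n+1)] at this
  have hmonos : Monotone s := monotone_nat_of_le_succ hsucc
  by_cases hfp : ∃ n, T (s n) = s n
  · obtain ⟨n, hn⟩ := hfp; exact ⟨s n, hn⟩
  push_neg at hfp
  have hne : ∀ n, s (n+1) ≠ s n := fun n => by rw [hstep n]; exact hfp n
  have hDpos : ∀ n, 0 < dd G s n := fun n => gpos hG (hne n).symm
  have hDnn : ∀ n, 0 ≤ dd G s n := fun n => (hDpos n).le
  have hφpos : ∀ t : ℝ, 0 < t → 0 < φ t := by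
    intro t ht
    rcases lt_or_eq_of_le (hφ.2.1 t ht.le) with h | h
    · exact h
    · exact absurd ((hφ.2.2 t ht.le).mp h.symm) (ne_of_gt ht)
  -- Step A: key one-step inequality and strict decrease
  have hkey : ∀ n, ψ (dd G s (n+1)) ≤ ψ (dd G s n) - φ (dd G s n) ∧ dd G s (n+1) < dd G s n := by
    intro n
    have hc := hcontr (s n) (s (n+1)) (s (n+1)) (hsucc n) le_rfl
    have hL : G (T (s n)) (T (s (n+1))) (T (s (n+1))) = dd G s (n+1) := by
      rw [← hstep n, ← hstep (n+1)]; rfl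
    rw [hL] at hc
    have hub := MA_le s hG T hstep n
    have hg1 := MA_ge1 (G := G) s T hstep n
    have hg2 := MA_ge2 (G := G) s T hstep n
    have hlt : dd G s (n+1) < dd G s n := by
      by_contra hge
      push_neg at hge
      have hMeq : Mfun G T (s n) (s (n+1)) (s (n+1)) = dd G s (n+1) :=
        le_antisymm (le_trans hub (max_le hge le_rfl)) hg2
      rw [hMeq] at hc
      have := hφpos _ (hDpos (n+1))
      linarith
    have hMeq : Mfun G T (s n) (s (n+1)) (s (n+1)) = dd G s n :=
      le_antisymm (le_trans hub (max_le le_rfl hlt.le)) hg1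
    rw [hMeq] at hc
    exact ⟨hc, hlt⟩
  -- Step B/C: dd tends to 0
  have hanti : Antitone (fun n => dd G s n) := antitone_nat_of_succ_le (fun n => (hkey n).2.le)
  have hbdd : BddBelow (range fun n => dd G s n) := ⟨0, by rintro x ⟨n, rfl⟩; exact hDnn n⟩
  have hconv : Tendsto (fun n => dd G s n) atTop (𝓝 (⨅ n, dd G s n)) :=
    tendsto_atTop_ciInf hanti hbdd
  have hrnn : 0 ≤ ⨅ n, dd G s n := le_ciInf hDnn
  have hshift : Tendsto (fun n => dd G s (n+1)) atTop (𝓝 (⨅ n, dd G s n)) :=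
    hconv.comp (tendsto_add_atTop_nat 1)
  have hr0 : (⨅ n, dd G s n) = 0 :=
    psi_phi_limit hψ hφ (fun n => dd G s (n+1)) (fun n => dd G s n) _ hrnn
      (fun n => hDnn _) hDnn hshift hconv (fun n => (hkey n).1)
  have hdzero : Tendsto (fun n => dd G s n) atTop (𝓝 0) := hr0 ▸ hconv
  -- Step D: pairwise Cauchy property
  have hP : ∀ ε : ℝ, 0 < ε → ∃ N, ∀ n, N ≤ n → ∀ m, n < m → G (s n) (s m) (s m) < ε := by
    by_contra hPc
    push_neg at hPc
    obtain ⟨ε, hε, hbad⟩ := hPc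
    choose nk hnkk hex using hbad
    have hminex : ∀ k, ∃ m, (nk k < m ∧ ε ≤ G (s (nk k)) (s m) (s m)) ∧
        ∀ j < m, ¬(nk k < j ∧ ε ≤ G (s (nk k)) (s j) (s j)) := by
      intro k
      exact ⟨Nat.find (hex k), Nat.find_spec (hex k), fun j hj => Nat.find_min (hex k) hj⟩
    choose mk hmk1 hmkmin using hminex
    have hmklt : ∀ k, nk k < mk k := fun k => (hmk1 k).1
    have hmkge : ∀ k, ε ≤ G (s (nk k)) (s (mk k)) (s (mk k)) := fun k => (hmk1 k).2
    have hqub : ∀ k, G (s (nk k)) (s (mk k)) (s (mk k)) ≤ ε + dd G s (mk k - 1) := by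
      intro k
      have hpos : 1 ≤ mk k := Nat.lt_of_le_of_lt (Nat.zero_le _) (hmklt k)
      have hsub : mk k - 1 + 1 = mk k := Nat.succ_pred_eq_of_pos hpos
      have hprev : G (s (nk k)) (s (mk k - 1)) (s (mk k - 1)) < ε := by
        have hle : nk k ≤ mk k - 1 := by have h2 := hmklt k; omega
        rcases eq_or_lt_of_le hle with h | h
        · rw [← h, hG.eq_zero_of_eq]; exact hε
        · have hjlt : mk k - 1 < mk k := by omega
          have hmin := hmkmin k (mk k - 1) hjlt
          rw [not_and] at hmin
          exact lt_of_not_ge (hmin h)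
      have hrect := hG.rect (s (nk k)) (s (mk k)) (s (mk k)) (s (mk k - 1))
      have hddeq : dd G s (mk k - 1) = G (s (mk k - 1)) (s (mk k)) (s (mk k)) := by
        simp only [dd, hsub]
      linarith
    have htnk : Tendsto nk atTop atTop := tendsto_atTop_mono hnkk tendsto_id
    have htmk : Tendsto mk atTop atTop :=
      tendsto_atTop_mono (fun k => (lt_of_le_of_lt (hnkk k) (hmklt k)).le) tendsto_id
    have htmk1 : Tendsto (fun k => mk k - 1) atTop atTop :=
      tendsto_atTop_mono (fun k => by
        show k ≤ mk k - 1
        have h1 := hnkk k; have h2 := hmklt k; omega) tendsto_id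
    have hdnk : Tendsto (fun k => dd G s (nk k)) atTop (𝓝 0) := hdzero.comp htnk
    have hdmk : Tendsto (fun k => dd G s (mk k)) atTop (𝓝 0) := hdzero.comp htmk
    have hdmk1 : Tendsto (fun k => dd G s (mk k - 1)) atTop (𝓝 0) := hdzero.comp htmk1
    have hq : Tendsto (fun k => G (s (nk k)) (s (mk k)) (s (mk k))) atTop (𝓝 ε) := by
      have h1 : Tendsto (fun k => ε + dd G s (mk k - 1)) atTop (𝓝 ε) := by
        simpa using tendsto_const_nhds.add hdmk1
      exact tendsto_of_tendsto_of_tendsto_of_le_of_le tendsto_const_nhds h1 hmkge hqub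
    -- M_k
    have hMub : ∀ k, Mfun G T (s (nk k)) (s (mk k)) (s (mk k)) ≤
        G (s (nk k)) (s (mk k)) (s (mk k)) + (3 * dd G s (nk k) + 2 * dd G s (mk k)) := by
      intro k
      have := M_le s hG T hstep (hne (mk k)) (nk k)
      simp only [AA] at this
      linarith
    have hMlb : ∀ k, G (s (nk k)) (s (mk k)) (s (mk k)) ≤
        Mfun G T (s (nk k)) (s (mk k)) (s (mk k)) := fun k => M_ge s T (nk k) (mk k)
    have hM : Tendsto (fun k => Mfun G T (s (nk k)) (s (mk k)) (s (mk k))) atTop (𝓝 ε) := by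
      have h1 : Tendsto (fun k => G (s (nk k)) (s (mk k)) (s (mk k)) +
          (3 * dd G s (nk k) + 2 * dd G s (mk k))) atTop (𝓝 ε) := by
        have := hq.add ((hdnk.const_mul 3).add (hdmk.const_mul 2))
        simpa using this
      exact tendsto_of_tendsto_of_tendsto_of_le_of_le hq h1 hMlb hMub
    -- L_k
    have hLlb : ∀ k, G (s (nk k)) (s (mk k)) (s (mk k)) -
        (dd G s (nk k) + 2 * dd G s (mk k)) ≤
        G (s (nk k + 1)) (s (mk k + 1)) (s (mk k + 1)) := by
      intro k
      have h1 := AA_left1 s hG (nk k) (mk k)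
      have h2 := AA_right2 s hG (nk k + 1) (mk k)
      simp only [AA] at h1 h2
      linarith
    have hLub : ∀ k, G (s (nk k + 1)) (s (mk k + 1)) (s (mk k + 1)) ≤
        2 * dd G s (nk k) + (G (s (nk k)) (s (mk k)) (s (mk k)) + dd G s (mk k)) := by
      intro k
      have h1 := AA_left2 s hG (nk k) (mk k + 1)
      have h2 := AA_right1 s hG (nk k) (mk k)
      simp only [AA] at h1 h2
      linarith
    have hL : Tendsto (fun k => G (s (nk k + 1)) (s (mk k + 1)) (s (mk k + 1))) atTop (𝓝 ε) := by
      have h1 : Tendsto (fun k => G (s (nk k)) (s (mk k)) (s (mk k)) -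
          (dd G s (nk k) + 2 * dd G s (mk k))) atTop (𝓝 ε) := by
        have := hq.sub (hdnk.add (hdmk.const_mul 2))
        simpa using this
      have h2 : Tendsto (fun k => 2 * dd G s (nk k) +
          (G (s (nk k)) (s (mk k)) (s (mk k)) + dd G s (mk k))) atTop (𝓝 ε) := by
        have := (hdnk.const_mul 2).add (hq.add hdmk)
        simpa using this
      exact tendsto_of_tendsto_of_tendsto_of_le_of_le h1 h2 hLlb hLub
    have hineq : ∀ k, ψ (G (s (nk k + 1)) (s (mk k + 1)) (s (mk k + 1))) ≤
        ψ (Mfun G T (s (nk k)) (s (mk k)) (s (mk k))) -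
        φ (Mfun G T (s (nk k)) (s (mk k)) (s (mk k))) := by
      intro k
      have hc := hcontr (s (nk k)) (s (mk k)) (s (mk k)) (hmonos (hmklt k).le) le_rfl
      rwa [← hstep (nk k), ← hstep (mk k)] at hc
    have hMnn : ∀ k, 0 ≤ Mfun G T (s (nk k)) (s (mk k)) (s (mk k)) :=
      fun k => le_trans (hG.nonneg _ _ _) (hMlb k)
    have heps0 : ε = 0 :=
      psi_phi_limit hψ hφ _ _ ε hε.le (fun k => hG.nonneg _ _ _) hMnn hL hM hineq
    exact absurd heps0 (ne_of_gt hε)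
  -- Cauchy
  have hcauchy : GCauchy G s := by
    intro ε hε
    obtain ⟨N, hN⟩ := hP (ε/5) (by linarith)
    refine ⟨N, fun n hn m hm l hl => ?_⟩
    have key : ∀ i j, N ≤ i → N ≤ j → G (s i) (s j) (s j) ≤ 2 * (ε/5) := by
      intro i j hi hj
      rcases lt_trichotomy i j with h | h | h
      · have h1 := hN i hi j h
        have h2 := hG.nonneg (s i) (s j) (s j)
        linarith
      · subst h
        rw [hG.eq_zero_of_eq]
        linarith
      · have h1 : G (s i) (s j) (s j) ≤ 2 * G (s j) (s i) (s i) := by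
          have e1 : G (s i) (s j) (s j) = G (s j) (s j) (s i) := gyyx hG _ _
          have e2 := gaab_le hG (s j) (s i)
          have e3 : G (s i) (s i) (s j) = G (s j) (s i) (s i) := gbaa hG _ _
          linarith
        have h2 := hN j hj i h
        linarith
    have h1 := hG.rect (s n) (s m) (s l) (s m)
    have h2 : G (s m) (s m) (s l) = G (s l) (s m) (s m) := gbaa hG _ _
    have k1 := key n m hn hm
    have k2 := key l m hl hm
    linarith
  obtain ⟨x, hx⟩ := hcomp s hcauchy
  have h1 : GConvergesTo G (fun n => T (s n)) (T x) := hTcont s x hx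
  have h2 : GConvergesTo G (fun n => s (n+1)) (T x) := by
    have he : (fun n => T (s n)) = fun n => s (n+1) := funext fun n => (hstep n).symm
    rwa [he] at h1
  have h3 : GConvergesTo G (fun n => s (n+1)) x := by
    have : Tendsto (fun n => G x (s n) (s n)) atTop (𝓝 0) := hx
    exact this.comp (tendsto_add_atTop_nat 1)
  exact ⟨x, glim_unique hG h2 h3⟩
end

section
/- Let X be a nonempty set and let f, g : X → [0,∞) be two functions with f(x) ≤ g(x) for all x ∈ X. Let ψ ∈ Ψ and φ ∈ Φ satisfy φ(t) ≤ ψ(t) for all t ∈ [0,∞). Then there exists φ₁ ∈ Φ such that ψ(f(x)) − φ(f(x)) ≤ ψ(g(x)) − φ₁(g(x)) for all x ∈ X. -/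
open Filter Topology Set

/-!
Take `φ₁ t = ψ t + min_{s ∈ [0,t]} (φ s - ψ s)`. Evaluating the minimum at `s = f x ≤ g x` gives
the inequality at once. The running minimum of a lower semicontinuous function is again lower
semicontinuous, and it is attained at some `m ≤ t`, so `φ₁ t = (ψ t - ψ m) + φ m` is a sum of
two nonnegative terms, which both vanish only when `m = 0` and then `t = 0`.
-/

section RunningInf

variable {α β : Type*} [ConditionallyCompleteLinearOrder α] [ConditionallyCompleteLinearOrder β]
  {h : α → β} {a t : α}

def runningInf (h : α → β) (a t : α) : β := sInf (h '' Icc a t)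

theorem runningInf_eq_of_isMinOn {m : α} (hm : m ∈ Icc a t) (hmin : IsMinOn h (Icc a t) m) :
    runningInf h a t = h m :=
  IsLeast.csInf_eq ⟨mem_image_of_mem h hm, forall_mem_image.2 fun _ hs => isMinOn_iff.1 hmin _ hs⟩

variable [TopologicalSpace α] [OrderTopology α]

theorem LowerSemicontinuousOn.exists_runningInf_eq (hh : LowerSemicontinuousOn h (Ici a))
    (hat : a ≤ t) : ∃ m ∈ Icc a t, runningInf h a t = h m := by
  obtain ⟨m, hm, hmin⟩ := (hh.mono Icc_subset_Ici_self).exists_isMinOn (nonempty_Icc.2 hat)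
    isCompact_Icc
  exact ⟨m, hm, runningInf_eq_of_isMinOn hm hmin⟩

theorem LowerSemicontinuousOn.runningInf_le (hh : LowerSemicontinuousOn h (Ici a)) {s : α}
    (hs : s ∈ Icc a t) : runningInf h a t ≤ h s := by
  obtain ⟨m, hm, hmin⟩ := (hh.mono Icc_subset_Ici_self).exists_isMinOn ⟨s, hs⟩ isCompact_Icc
  exact (runningInf_eq_of_isMinOn hm hmin).trans_le (isMinOn_iff.1 hmin s hs)

theorem LowerSemicontinuousOn.runningInf [NoMaxOrder α] (hh : LowerSemicontinuousOn h (Ici a)) :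
    LowerSemicontinuousOn (runningInf h a) (Ici a) := by
  intro t₀ ht₀ y hy
  have hnear : ∀ᶠ s in 𝓝[≥] t₀, y < h s :=
    nhdsWithin_mono _ (Ici_subset_Ici.2 ht₀)
      (hh t₀ ht₀ y (hy.trans_le (hh.runningInf_le ⟨ht₀, le_rfl⟩)))
  obtain ⟨u, hu, hIco⟩ := mem_nhdsGE_iff_exists_Ico_subset.1 hnear
  filter_upwards [mem_nhdsWithin_of_mem_nhds (Iio_mem_nhds hu), self_mem_nhdsWithin]
    with t htu hat
  obtain ⟨m, hm, hm_eq⟩ := hh.exists_runningInf_eq hat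
  rw [hm_eq]
  -- a minimizer left of `t₀` is controlled by the minimum up to `t₀`, one right of it by `hnear`
  rcases le_or_gt m t₀ with hmt | hmt
  · exact hy.trans_le (hh.runningInf_le ⟨hm.1, hmt⟩)
  · exact hIco ⟨hmt.le, hm.2.trans_lt htu⟩

end RunningInf

section MemPhi

variable {ψ φ : ℝ → ℝ}

theorem MemPhi.lowerSemicontinuousOn_sub (hφ : MemPhi φ) (hψ : MemPsi ψ) :
    LowerSemicontinuousOn (fun t => φ t - ψ t) (Ici 0) := by
  simpa only [sub_eq_add_neg, Pi.neg_apply] using hφ.1.add hψ.1.neg.lowerSemicontinuousOn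

theorem MemPhi.add_runningInf_sub (hφ : MemPhi φ) (hψ : MemPsi ψ) :
    MemPhi fun t => ψ t + runningInf (fun s => φ s - ψ s) 0 t := by
  have hlsc := hφ.lowerSemicontinuousOn_sub hψ
  obtain ⟨hψ_cont, hψ_mono, -, hψ_eq_zero⟩ := hψ
  obtain ⟨-, hφ_nonneg, hφ_eq_zero⟩ := hφ
  have hsplit : ∀ t ≥ (0 : ℝ), ∃ m ∈ Icc 0 t,
      ψ t + runningInf (fun s => φ s - ψ s) 0 t = (ψ t - ψ m) + φ m ∧
        ψ m ≤ ψ t ∧ 0 ≤ φ m := by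
    intro t ht
    obtain ⟨m, hm, hm_eq⟩ := hlsc.exists_runningInf_eq ht
    exact ⟨m, hm, by rw [hm_eq]; ring, hψ_mono hm.1 (hm.1.trans hm.2) hm.2, hφ_nonneg m hm.1⟩
  refine ⟨hψ_cont.lowerSemicontinuousOn.add hlsc.runningInf, fun t ht => ?_, fun t ht => ?_⟩
  · obtain ⟨m, -, heq, hψm, hφm⟩ := hsplit t ht
    simp only [heq]
    linarith
  · obtain ⟨m, hm, heq, hψm, hφm⟩ := hsplit t ht
    simp only [heq]
    constructor
    · intro hzero
      have hm0 : m = 0 := (hφ_eq_zero m hm.1).1 (by linarith)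
      subst hm0
      exact (hψ_eq_zero t ht).1 (by linarith [(hψ_eq_zero 0 le_rfl).2 rfl])
    · rintro rfl
      obtain rfl : m = 0 := le_antisymm hm.2 hm.1
      simp [(hφ_eq_zero 0 le_rfl).2 rfl]

end MemPhi

theorem stmt3_general {X : Type*} (f g : X → ℝ)
    (hf_nonneg : ∀ x, 0 ≤ f x)
    (hfg : ∀ x, f x ≤ g x)
    (ψ φ : ℝ → ℝ) (hψ : MemPsi ψ) (hφ : MemPhi φ) :
    ∃ φ₁ : ℝ → ℝ, MemPhi φ₁ ∧
      ∀ x, ψ (f x) - φ (f x) ≤ ψ (g x) - φ₁ (g x) := by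
  refine ⟨_, hφ.add_runningInf_sub hψ, fun x => ?_⟩
  have := (hφ.lowerSemicontinuousOn_sub hψ).runningInf_le ⟨hf_nonneg x, hfg x⟩
  linarith

theorem stmt3 {X : Type*} [Nonempty X] (f g : X → ℝ)
    (hf_nonneg : ∀ x, 0 ≤ f x) (hg_nonneg : ∀ x, 0 ≤ g x)
    (hfg : ∀ x, f x ≤ g x)
    (ψ φ : ℝ → ℝ) (hψ : MemPsi ψ) (hφ : MemPhi φ)
    (hφψ : ∀ t ≥ (0 : ℝ), φ t ≤ ψ t) :
    ∃ φ₁ : ℝ → ℝ, MemPhi φ₁ ∧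
      ∀ x, ψ (f x) - φ (f x) ≤ ψ (g x) - φ₁ (g x) :=
  stmt3_general f g hf_nonneg hfg ψ φ hψ hφ
end

section
/- Let (X,⪯,G) be a G-complete partially ordered G-metric space that is regular non-decreasing, and let T : X → X be a map that is non-decreasing with respect to ⪯ and satisfies x₀ ⪯ T x₀ for some x₀ ∈ X. Suppose there exist ψ ∈ Ψ and φ ∈ Φ such that for all x, y, z ∈ X with x ⪯ y ⪯ z, ψ(G(Tx,Ty,Tz)) ≤ ψ(G(x,y,z)) − φ(G(x,y,z)). Then T has a fixed point in X. -/
open Filter Topology Set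

lemma IsGMetric.perm1 {X : Type*} {G : X → X → X → ℝ} (hG : IsGMetric G) (x y : X) :
    G x y y = G y y x := by
  rw [hG.swap_left, hG.swap_right]

lemma IsGMetric.double {X : Type*} {G : X → X → X → ℝ} (hG : IsGMetric G) (x y : X) :
    G x y y ≤ 2 * G y x x := by
  have h1 : G x y y = G y y x := hG.perm1 x y
  have h2 := hG.rect y y x x
  have h3 : G x y x = G y x x := (hG.swap_left y x x).symm
  linarith

lemma IsGMetric.pos' {X : Type*} {G : X → X → X → ℝ} (hG : IsGMetric G) {x y : X}
    (h : x ≠ y) : 0 < G y x x := by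
  have := hG.pos_of_ne x y h
  rw [hG.perm1 y x]; exact this

lemma key_limit (ψ φ : ℝ → ℝ) (hψ : MemPsi ψ) (hφ : MemPhi φ)
    (a b : ℕ → ℝ) (ha0 : ∀ k, 0 ≤ a k) (hb0 : ∀ k, 0 ≤ b k)
    (r : ℝ) (hr : 0 ≤ r)
    (hat : Tendsto a atTop (𝓝 r)) (hbt : Tendsto b atTop (𝓝 r))
    (hle : ∀ k, ψ (b k) ≤ ψ (a k) - φ (a k)) : r = 0 := by
  by_contra hr0
  have hφr : 0 < φ r := lt_of_le_of_ne (hφ.2.1 r hr) (fun h => hr0 ((hφ.2.2 r hr).1 h.symm))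
  have hat' : Tendsto a atTop (𝓝[Ici 0] r) :=
    tendsto_nhdsWithin_iff.2 ⟨hat, Eventually.of_forall ha0⟩
  have hbt' : Tendsto b atTop (𝓝[Ici 0] r) :=
    tendsto_nhdsWithin_iff.2 ⟨hbt, Eventually.of_forall hb0⟩
  have hψa : Tendsto (fun k => ψ (a k)) atTop (𝓝 (ψ r)) := ((hψ.1 r hr).tendsto).comp hat'
  have hψb : Tendsto (fun k => ψ (b k)) atTop (𝓝 (ψ r)) := ((hψ.1 r hr).tendsto).comp hbt'
  have hdiff : Tendsto (fun k => ψ (a k) - ψ (b k)) atTop (𝓝 0) := by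
    have := hψa.sub hψb; simpa using this
  have h1 : ∀ᶠ k in atTop, ψ (a k) - ψ (b k) < φ r / 2 :=
    hdiff.eventually_lt_const (by linarith)
  have h2 : ∀ᶠ k in atTop, φ r / 2 < φ (a k) :=
    hat'.eventually (hφ.1 r hr (φ r / 2) (by linarith))
  obtain ⟨k, hk1, hk2⟩ := (h1.and h2).exists
  have := hle k
  linarith

theorem stmt6 {X : Type*} [Nonempty X] [PartialOrder X] (G : X → X → X → ℝ)
    (hG : IsGMetric G) (hcomp : GComplete G) (hreg : RegularNondecreasing G)
    (T : X → X) (hTmono : Monotone T)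
    (x₀ : X) (hx₀ : x₀ ≤ T x₀)
    (ψ φ : ℝ → ℝ) (hψ : MemPsi ψ) (hφ : MemPhi φ)
    (hcontr : ∀ x y z : X, x ≤ y → y ≤ z →
      ψ (G (T x) (T y) (T z)) ≤ ψ (G x y z) - φ (G x y z)) :
    ∃ x : X, T x = x := by
  classical
  have hψ0 : ψ 0 = 0 := (hψ.2.2.2 0 le_rfl).2 rfl
  have hφ0 : φ 0 = 0 := (hφ.2.2 0 le_rfl).2 rfl
  set x : ℕ → X := fun n => T^[n] x₀ with hx
  have hxs : ∀ n, x (n + 1) = T (x n) := fun n => Function.iterate_succ_apply' T n x₀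
  have hxstep : ∀ n, x n ≤ x (n + 1) := by
    intro n
    induction n with
    | zero => rw [hxs 0]; exact hx₀
    | succ n ih =>
      have := hTmono ih
      rw [← hxs n, ← hxs (n + 1)] at this
      exact this
  have hmono : Monotone x := monotone_nat_of_le_succ hxstep
  set d : ℕ → ℕ → ℝ := fun n m => G (x n) (x m) (x m) with hd
  have hd0 : ∀ n m, 0 ≤ d n m := fun n m => hG.nonneg _ _ _
  have hddiag : ∀ n, d n n = 0 := fun n => hG.eq_zero_of_eq _
  have hdtri : ∀ n m l, d n l ≤ d n m + d m l := fun n m l => hG.rect (x n) (x l) (x l) (x m)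
  have hddouble : ∀ n m, d n m ≤ 2 * d m n := fun n m => hG.double (x n) (x m)
  set g : ℕ → ℝ := fun n => d n (n + 1) with hg
  have hc : ∀ n m, n ≤ m → ψ (d (n + 1) (m + 1)) ≤ ψ (d n m) - φ (d n m) := by
    intro n m h
    have := hcontr (x n) (x m) (x m) (hmono h) le_rfl
    simp only [hd]
    rw [hxs n, hxs m]
    exact this
  have hgc : ∀ n, ψ (g (n + 1)) ≤ ψ (g n) - φ (g n) := fun n => hc n (n + 1) (Nat.le_succ n)
  have hgdec : ∀ n, g (n + 1) ≤ g n := by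
    intro n
    by_contra hlt
    push_neg at hlt
    have hmle : ψ (g n) ≤ ψ (g (n + 1)) :=
      hψ.2.1 (hd0 n (n+1)) (hd0 (n+1) (n+2)) (le_of_lt hlt)
    have hφn : φ (g n) ≤ 0 := by have := hgc n; linarith
    have hgn0 : g n = 0 := (hφ.2.2 (g n) (hd0 n (n+1))).1 (le_antisymm hφn (hφ.2.1 _ (hd0 n (n+1))))
    have h1 : ψ (g (n + 1)) ≤ 0 := by have := hgc n; rw [hgn0, hψ0, hφ0] at this; linarith
    have h2 : g (n + 1) = 0 := (hψ.2.2.2 _ (hd0 (n+1) (n+2))).1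
      (le_antisymm h1 (hψ.2.2.1 _ (hd0 (n+1) (n+2))))
    rw [hgn0] at hlt
    exact absurd h2 (ne_of_gt hlt)
  have hganti : Antitone g := antitone_nat_of_succ_le hgdec
  have hgbdd : BddBelow (Set.range g) := ⟨0, by rintro _ ⟨n, rfl⟩; exact hd0 n (n+1)⟩
  have hgr : Tendsto g atTop (𝓝 (⨅ n, g n)) := tendsto_atTop_ciInf hganti hgbdd
  have hrnn : 0 ≤ ⨅ n, g n := le_ciInf fun n => hd0 n (n+1)
  have hr0 : (⨅ n, g n) = 0 :=
    key_limit ψ φ hψ hφ g (fun n => g (n + 1)) (fun n => hd0 n (n+1)) (fun n => hd0 _ _)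
      _ hrnn hgr (hgr.comp (tendsto_add_atTop_nat 1)) hgc
  have hg0 : Tendsto g atTop (𝓝 0) := hr0 ▸ hgr
  -- pairwise Cauchy
  have hpair : ∀ ε > (0:ℝ), ∃ N, ∀ n ≥ N, ∀ m ≥ N, d n m < ε := by
    by_contra hcon
    push_neg at hcon
    obtain ⟨ε, hε, hfail⟩ := hcon
    have hfail2 : ∀ N, ∃ n, ∃ m, N ≤ n ∧ n < m ∧ ε / 2 ≤ d n m := by
      intro N
      obtain ⟨n, hn, m, hm, hdnm⟩ := hfail N
      rcases lt_trichotomy n m with h | h | h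
      · exact ⟨n, m, hn, h, by linarith⟩
      · subst h; rw [hddiag n] at hdnm; linarith
      · refine ⟨m, n, hm, h, ?_⟩
        have := hddouble n m; linarith
    have hε' : (0:ℝ) < ε / 2 := by linarith
    choose nk mk0 h1 h2 h3 using hfail2
    have hex : ∀ k, ∃ m, nk k < m ∧ ε / 2 ≤ d (nk k) m := fun k => ⟨mk0 k, h2 k, h3 k⟩
    set mk : ℕ → ℕ := fun k => Nat.find (hex k) with hmk
    have hspec : ∀ k, nk k < mk k ∧ ε / 2 ≤ d (nk k) (mk k) := fun k => Nat.find_spec (hex k)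
    have hknk : ∀ k, k ≤ nk k := h1
    have hnkmk : ∀ k, nk k ≤ mk k - 1 := fun k => Nat.le_sub_one_of_lt (hspec k).1
    have hmkpos : ∀ k, 0 < mk k := fun k => (Nat.zero_le _).trans_lt (hspec k).1
    have hmin : ∀ k, d (nk k) (mk k - 1) < ε / 2 := by
      intro k
      rcases eq_or_lt_of_le (hnkmk k) with h | h
      · rw [← h, hddiag]; exact hε'
      · have hlt : mk k - 1 < mk k := Nat.sub_lt (hmkpos k) one_pos
        have := Nat.find_min (hex k) hlt
        push_neg at this
        exact this h
    have hmm1 : ∀ k, (mk k - 1) + 1 = mk k := fun k => Nat.succ_pred_eq_of_pos (hmkpos k)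
    set a : ℕ → ℝ := fun k => d (nk k) (mk k) with ha
    set b : ℕ → ℝ := fun k => d (nk k + 1) (mk k + 1) with hb
    have hnkT : Tendsto nk atTop atTop := tendsto_atTop_mono hknk tendsto_id
    have hmk1T : Tendsto (fun k => mk k - 1) atTop atTop :=
      tendsto_atTop_mono (fun k => le_trans (hknk k) (hnkmk k)) tendsto_id
    have hmkT : Tendsto mk atTop atTop :=
      tendsto_atTop_mono (fun k => le_trans (le_trans (hknk k) (hnkmk k)) (Nat.sub_le _ _)) tendsto_id
    have hgnk : Tendsto (fun k => g (nk k)) atTop (𝓝 0) := hg0.comp hnkT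
    have hgmk : Tendsto (fun k => g (mk k)) atTop (𝓝 0) := hg0.comp hmkT
    have hgmk1 : Tendsto (fun k => g (mk k - 1)) atTop (𝓝 0) := hg0.comp hmk1T
    have haup : ∀ k, a k ≤ ε / 2 + g (mk k - 1) := by
      intro k
      have ht := hdtri (nk k) (mk k - 1) (mk k)
      have heq : d (mk k - 1) (mk k) = g (mk k - 1) := by
        simp only [hg]; rw [hmm1 k]
      rw [heq] at ht
      have := hmin k
      simp only [ha]
      linarith
    have hat : Tendsto a atTop (𝓝 (ε / 2)) := by
      have hup : Tendsto (fun k => ε / 2 + g (mk k - 1)) atTop (𝓝 (ε / 2)) := by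
        simpa using tendsto_const_nhds.add hgmk1
      exact tendsto_of_tendsto_of_tendsto_of_le_of_le tendsto_const_nhds hup
        (fun k => (hspec k).2) haup
    have hblow : ∀ k, a k - g (nk k) - 2 * g (mk k) ≤ b k := by
      intro k
      have t1 : a k ≤ g (nk k) + d (nk k + 1) (mk k) := hdtri (nk k) (nk k + 1) (mk k)
      have t2 : d (nk k + 1) (mk k) ≤ b k + d (mk k + 1) (mk k) := hdtri (nk k + 1) (mk k + 1) (mk k)
      have t3 : d (mk k + 1) (mk k) ≤ 2 * g (mk k) := hddouble (mk k + 1) (mk k)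
      linarith
    have hbup : ∀ k, b k ≤ a k + 2 * g (nk k) + g (mk k) := by
      intro k
      have t1 : b k ≤ d (nk k + 1) (nk k) + d (nk k) (mk k + 1) := hdtri (nk k + 1) (nk k) (mk k + 1)
      have t2 : d (nk k + 1) (nk k) ≤ 2 * g (nk k) := hddouble (nk k + 1) (nk k)
      have t3 : d (nk k) (mk k + 1) ≤ a k + g (mk k) := hdtri (nk k) (mk k) (mk k + 1)
      linarith
    have hbt : Tendsto b atTop (𝓝 (ε / 2)) := by
      have hlo : Tendsto (fun k => a k - g (nk k) - 2 * g (mk k)) atTop (𝓝 (ε / 2)) := by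
        have := (hat.sub hgnk).sub (hgmk.const_mul 2)
        simpa [mul_comm] using this
      have hup : Tendsto (fun k => a k + 2 * g (nk k) + g (mk k)) atTop (𝓝 (ε / 2)) := by
        have := (hat.add (hgnk.const_mul 2)).add hgmk
        simpa using this
      exact tendsto_of_tendsto_of_tendsto_of_le_of_le hlo hup hblow hbup
    have hlek : ∀ k, ψ (b k) ≤ ψ (a k) - φ (a k) := fun k => hc _ _ (le_of_lt (hspec k).1)
    have := key_limit ψ φ hψ hφ a b (fun k => hd0 _ _) (fun k => hd0 _ _) (ε / 2)
      (le_of_lt hε') hat hbt hlek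
    linarith
  -- G-Cauchy
  have hcauchy : GCauchy G x := by
    intro ε hε
    obtain ⟨N, hN⟩ := hpair (ε / 2) (by linarith)
    refine ⟨N, fun n hn m hm l hl => ?_⟩
    have t1 : G (x n) (x m) (x l) ≤ G (x n) (x m) (x m) + G (x m) (x m) (x l) :=
      hG.rect (x n) (x m) (x l) (x m)
    have t2 : G (x m) (x m) (x l) = d l m := (hG.perm1 (x l) (x m)).symm
    have t3 := hN n hn m hm
    have t4 := hN l hl m hm
    simp only [hd] at t3 t4
    rw [t2] at t1
    simp only [hd] at t1
    linarith
  obtain ⟨z, hz⟩ := hcomp x hcauchy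
  have hlez : ∀ n, x n ≤ z := hreg x z hmono hz
  set c : ℕ → ℝ := fun n => G (x n) z z with hcdef
  have hc0 : ∀ n, 0 ≤ c n := fun n => hG.nonneg _ _ _
  have hcle : ∀ n, c n ≤ 2 * G z (x n) (x n) := fun n => hG.double (x n) z
  have hct : Tendsto c atTop (𝓝 0) := by
    have hup : Tendsto (fun n => 2 * G z (x n) (x n)) atTop (𝓝 0) := by
      simpa using hz.const_mul 2
    exact tendsto_of_tendsto_of_tendsto_of_le_of_le tendsto_const_nhds hup hc0 hcle
  set e : ℕ → ℝ := fun n => G (x (n + 1)) (T z) (T z) with hedef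
  have he0 : ∀ n, 0 ≤ e n := fun n => hG.nonneg _ _ _
  have hecontr : ∀ n, ψ (e n) ≤ ψ (c n) - φ (c n) := by
    intro n
    have := hcontr (x n) z z (hlez n) le_rfl
    simp only [hedef, hcdef]
    rw [hxs n]
    exact this
  have hψc : Tendsto (fun n => ψ (c n)) atTop (𝓝 0) := by
    have hct' : Tendsto c atTop (𝓝[Ici 0] (0:ℝ)) :=
      tendsto_nhdsWithin_iff.2 ⟨hct, Eventually.of_forall hc0⟩
    have := ((hψ.1 0 self_mem_Ici).tendsto).comp hct'
    rwa [hψ0] at this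
  have het : Tendsto e atTop (𝓝 0) := by
    rw [tendsto_order]
    constructor
    · intro l hl
      exact Eventually.of_forall fun n => lt_of_lt_of_le hl (he0 n)
    · intro u hu
      have hψu : 0 < ψ u := lt_of_le_of_ne (hψ.2.2.1 u (le_of_lt hu))
        (fun h => (ne_of_gt hu) ((hψ.2.2.2 u (le_of_lt hu)).1 h.symm))
      filter_upwards [hψc.eventually_lt_const hψu] with n hn
      by_contra hge
      push_neg at hge
      have hmle : ψ u ≤ ψ (e n) := hψ.2.1 (le_of_lt hu) (he0 n) hge
      have hφc : 0 ≤ φ (c n) := hφ.2.1 _ (hc0 n)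
      have := hecontr n
      linarith
  have hfinal : G z (T z) (T z) ≤ 0 := by
    have hb : ∀ n, G z (T z) (T z) ≤ G z (x (n + 1)) (x (n + 1)) + e n :=
      fun n => hG.rect z (T z) (T z) (x (n + 1))
    have hlim : Tendsto (fun n => G z (x (n + 1)) (x (n + 1)) + e n) atTop (𝓝 0) := by
      have := (hz.comp (tendsto_add_atTop_nat 1)).add het
      simpa using this
    exact ge_of_tendsto hlim (Eventually.of_forall hb)
  refine ⟨z, ?_⟩
  by_contra hne
  have : 0 < G z (T z) (T z) := hG.pos' hne
  linarith
end

section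
/- Let (X,⪯,G) be a G-complete partially ordered G-metric space and let T : X → X be a map that is non-decreasing with respect to ⪯ and satisfies x₀ ⪯ T x₀ for some x₀ ∈ X. Suppose there exist ψ ∈ Ψ and φ ∈ Φ such that for all x, y ∈ X with x ⪯ y, ψ(G(Tx,Ty,T²x)) ≤ ψ(N(x,y)) − φ(N(x,y)), where N(x,y) = max{G(x,Tx,y), G(Tx,T²x,T²x), (1/2)[G(x,Tx,Tx) + G(y,Ty,Ty)], (1/2)[G(x,T²x,Ty) + G(Tx,Tx,y)]}. If either T is G-continuous or (X,⪯,G) is regular non-decreasing, then T has a fixed point in X. -/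
open Filter Topology Set

namespace Gaux

variable {X : Type*} {G : X → X → X → ℝ} (hG : IsGMetric G)
include hG

lemma cyc (x y z : X) : G x y z = G y z x := by
  rw [hG.swap_left, hG.swap_right]

lemma cyc2 (x y z : X) : G x y z = G z x y := by
  rw [cyc hG, cyc hG]

lemma two_a (x y : X) : G x x y ≤ 2 * G x y y := by
  have h := hG.rect x x y y
  have h1 : G y x y = G x y y := by rw [hG.swap_left, hG.swap_right]
  linarith [h, h1.le, h1.ge]

lemma two_b (x y : X) : G x y y ≤ 2 * G x x y := by
  have h := hG.rect y y x x
  have e1 : G x y y = G y y x := by rw [cyc hG]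
  have e2 : G y x x = G x x y := by rw [cyc hG, hG.swap_right]
  have e3 : G x y x = G x x y := by rw [hG.swap_right]
  linarith [h, e1.le, e1.ge, e2.le, e2.ge, e3.le, e3.ge]

lemma eq_of_zero {x y : X} (h : G x y y ≤ 0) : x = y := by
  by_contra hne
  have h1 := hG.pos_of_ne x y hne
  have h2 := two_a hG x y
  linarith

lemma pos_gyy {x y : X} (h : x ≠ y) : 0 < G x y y := by
  by_contra hc
  exact h (eq_of_zero hG (not_lt.1 hc))

end Gaux

lemma phi_pos {φ : ℝ → ℝ} (hφ : MemPhi φ) {t : ℝ} (ht : 0 < t) : 0 < φ t := by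
  rcases (hφ.2.1 t ht.le).lt_or_eq with h | h
  · exact h
  · exact absurd ((hφ.2.2 t ht.le).1 h.symm) ht.ne'

lemma phi_min {φ : ℝ → ℝ} (hφ : MemPhi φ) {a b : ℝ} (ha : 0 < a) (hab : a ≤ b) :
    ∃ c > 0, ∀ t ∈ Icc a b, c ≤ φ t := by
  by_contra h
  push_neg at h
  have hseq : ∀ j : ℕ, ∃ t ∈ Icc a b, φ t < 1 / (j + 1) := fun j =>
    h (1 / (j + 1)) (by positivity)
  choose t ht hlt using hseq
  obtain ⟨l, hl, σ, hσ, htend⟩ := isCompact_Icc.tendsto_subseq ht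
  have hl0 : 0 < l := lt_of_lt_of_le ha hl.1
  have hlsc := hφ.1 l (le_of_lt hl0)
  have hev := hlsc (φ l / 2) (by linarith [phi_pos hφ hl0])
  have htend' : Tendsto (t ∘ σ) atTop (𝓝[Ici 0] l) := by
    rw [tendsto_nhdsWithin_iff]
    exact ⟨htend, Eventually.of_forall fun j => le_trans ha.le (ht (σ j)).1⟩
  have hev2 : ∀ᶠ j in atTop, φ l / 2 < φ (t (σ j)) := htend' hev
  have hsmall : ∀ᶠ j : ℕ in atTop, (1 : ℝ) / (j + 1) < φ l / 2 :=
    tendsto_one_div_add_atTop_nhds_zero_nat.eventually_lt_const (by linarith [phi_pos hφ hl0])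
  obtain ⟨j, h1, h2⟩ := (hev2.and hsmall).exists
  have h3 : (1 : ℝ) / (σ j + 1) ≤ 1 / (j + 1) := by
    apply one_div_le_one_div_of_le (by positivity)
    have h4 : j ≤ σ j := hσ.le_apply
    have h5 : (j : ℝ) ≤ σ j := Nat.cast_le.2 h4
    linarith
  linarith [hlt (σ j)]

theorem stmt7 {X : Type*} [Nonempty X] [PartialOrder X] (G : X → X → X → ℝ)
    (hG : IsGMetric G) (hcomp : GComplete G) (T : X → X) (hTmono : Monotone T)
    (x₀ : X) (hx₀ : x₀ ≤ T x₀)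
    (ψ φ : ℝ → ℝ) (hψ : MemPsi ψ) (hφ : MemPhi φ)
    (hcontr : ∀ x y : X, x ≤ y →
      ψ (G (T x) (T y) (T (T x))) ≤ ψ (Nfun G T x y) - φ (Nfun G T x y))
    (hcases : GContinuousMap G T ∨ RegularNondecreasing G) :
    ∃ x : X, T x = x := by
  have nn := hG.nonneg
  have R := hG.rect
  have cyc := Gaux.cyc hG
  have cyc2 := Gaux.cyc2 hG
  have swl := hG.swap_left
  have swr := hG.swap_right
  have D2 := Gaux.two_a hG
  have D2' := Gaux.two_b hG
  have PSm : ∀ u v : ℝ, 0 ≤ u → u ≤ v → ψ u ≤ ψ v := fun u v hu huv =>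
    hψ.2.1 hu (le_trans hu huv) huv
  have PSnn : ∀ u : ℝ, 0 ≤ u → 0 ≤ ψ u := fun u hu => hψ.2.2.1 u hu
  set s : ℕ → X := fun n => T^[n] x₀ with hs_def
  have hs : ∀ n, s (n + 1) = T (s n) := fun n => Function.iterate_succ_apply' T n x₀
  by_cases hfix : ∃ n, T (s n) = s n
  · obtain ⟨n, h⟩ := hfix; exact ⟨s n, h⟩
  push_neg at hfix
  have hne : ∀ n, s n ≠ s (n + 1) := fun n h => hfix n (by rw [← hs n]; exact h.symm)
  set a : ℕ → ℝ := fun n => G (s n) (s (n + 1)) (s (n + 1)) with ha_def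
  have apos : ∀ n, 0 < a n := fun n => Gaux.pos_gyy hG (hne n)
  have anneg : ∀ n, 0 ≤ a n := fun n => (apos n).le
  have mono : Monotone s := by
    apply monotone_nat_of_le_succ
    intro n
    induction n with
    | zero =>
      have h0 : s 0 = x₀ := rfl
      calc s 0 = x₀ := h0
        _ ≤ T x₀ := hx₀
        _ = s 1 := by rw [hs 0, h0]
    | succ n ih =>
      calc s (n + 1) = T (s n) := hs n
        _ ≤ T (s (n + 1)) := hTmono ih
        _ = s (n + 2) := (hs (n + 1)).symm
  have key : ∀ n m : ℕ, n ≤ m →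
      ψ (G (s (n + 1)) (s (m + 1)) (s (n + 2))) ≤
        ψ (Nfun G T (s n) (s m)) - φ (Nfun G T (s n) (s m)) := by
    intro n m h
    have hc := hcontr (s n) (s m) (mono h)
    rwa [← hs n, ← hs m, ← hs (n + 1)] at hc
  have hNeq : ∀ n m : ℕ, Nfun G T (s n) (s m) =
      max (G (s n) (s (n + 1)) (s m)) (max (a (n + 1))
        (max ((a n + G (s m) (s (m + 1)) (s (m + 1))) / 2)
          ((G (s n) (s (n + 2)) (s (m + 1)) + G (s (n + 1)) (s (n + 1)) (s m)) / 2))) := by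
    intro n m
    simp only [Nfun, ← hs n, ← hs (n + 1), ← hs m, ha_def]
  -- consecutive bounds
  have hNcons_le : ∀ n, Nfun G T (s n) (s (n + 1)) ≤ max (a n) (a (n + 1)) := by
    intro n
    rw [hNeq n (n + 1)]
    have h1 : G (s n) (s (n + 1)) (s (n + 1)) = a n := rfl
    have h4a : G (s n) (s (n + 2)) (s (n + 2)) ≤ a n + a (n + 1) :=
      R (s n) (s (n + 2)) (s (n + 2)) (s (n + 1))
    have h4b : G (s (n + 1)) (s (n + 1)) (s (n + 1)) = 0 := hG.eq_zero_of_eq _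
    have hmx1 := le_max_left (a n) (a (n + 1))
    have hmx2 := le_max_right (a n) (a (n + 1))
    apply max_le (by rw [h1]; exact hmx1)
    apply max_le hmx2
    apply max_le (by linarith)
    rw [h4b]
    linarith
  have hNcons_ge : ∀ n, a (n + 1) ≤ Nfun G T (s n) (s (n + 1)) := by
    intro n
    rw [hNeq n (n + 1)]
    exact le_trans (le_max_left _ _) (le_max_right _ _)
  have hNnn : ∀ n m, 0 ≤ Nfun G T (s n) (s m) := by
    intro n m
    rw [hNeq n m]
    exact le_trans (nn _ _ _) (le_max_left _ _)
  have aanti : ∀ n, a (n + 1) ≤ a n := by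
    intro n
    by_contra hlt
    push_neg at hlt
    have hN1 := hNcons_le n
    have hN2 := hNcons_ge n
    rw [max_eq_right hlt.le] at hN1
    have hNe : Nfun G T (s n) (s (n + 1)) = a (n + 1) := le_antisymm hN1 hN2
    have hk := key n (n + 1) (Nat.le_succ n)
    have hL : G (s (n + 1)) (s (n + 2)) (s (n + 2)) = a (n + 1) := rfl
    rw [hL, hNe] at hk
    have := phi_pos hφ (apos (n + 1))
    linarith
  have adec : Antitone a := antitone_nat_of_succ_le aanti
  have hNle : ∀ n, Nfun G T (s n) (s (n + 1)) ≤ a n := fun n =>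
    le_trans (hNcons_le n) (max_le le_rfl (aanti n))
  -- a tends to zero
  have hexistssmall : ∀ ε > (0 : ℝ), ∃ n, a n < ε := by
    intro ε hε
    by_contra hc
    push_neg at hc
    obtain ⟨c, hc0, hcmin⟩ := phi_min hφ hε (hc 0)
    have hstep : ∀ n, ψ (a (n + 1)) + c ≤ ψ (a n) := by
      intro n
      have hk := key n (n + 1) (Nat.le_succ n)
      have hL : G (s (n + 1)) (s (n + 2)) (s (n + 2)) = a (n + 1) := rfl
      rw [hL] at hk
      have hmem : Nfun G T (s n) (s (n + 1)) ∈ Icc ε (a 0) :=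
        ⟨le_trans (hc (n + 1)) (hNcons_ge n), le_trans (hNle n) (adec (Nat.zero_le n))⟩
      have hφN := hcmin _ hmem
      have hψN : ψ (Nfun G T (s n) (s (n + 1))) ≤ ψ (a n) :=
        PSm _ _ (hNnn n (n + 1)) (hNle n)
      linarith
    have hiter : ∀ n : ℕ, ψ (a n) + n * c ≤ ψ (a 0) := by
      intro n
      induction n with
      | zero => simp
      | succ n ih =>
        have := hstep n
        push_cast
        push_cast at ih
        linarith
    obtain ⟨n, hn⟩ := exists_nat_gt (ψ (a 0) / c)
    have h1 := hiter n
    have h2 := PSnn (a n) (anneg n)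
    have h3 : ψ (a 0) / c < n := hn
    have h4 : ψ (a 0) < n * c := by
      rw [div_lt_iff₀ hc0] at h3
      linarith
    linarith
  have a0 : Tendsto a atTop (𝓝 0) := by
    rw [Metric.tendsto_atTop]
    intro ε hε
    obtain ⟨N, hN⟩ := hexistssmall ε hε
    exact ⟨N, fun n hn => by
      rw [Real.dist_eq, sub_zero, abs_of_nonneg (anneg n)]
      exact lt_of_le_of_lt (adec hn) hN⟩
  -- Cauchy claim
  have claimS : ∀ ε > (0:ℝ), ∃ N, ∀ n m, N ≤ n → n < m → G (s n) (s n) (s m) < ε := by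
    by_contra hcon
    push_neg at hcon
    obtain ⟨ε, hε, hbad⟩ := hcon
    classical
    have hchoice : ∀ k : ℕ, ∃ n m : ℕ, k ≤ n ∧ n < m ∧ ε ≤ G (s n) (s n) (s m) ∧
        ∀ j, n < j → j < m → G (s n) (s n) (s j) < ε := by
      intro k
      obtain ⟨n, m0, hkn, hnm0, hge0⟩ := hbad k
      have hex : ∃ m, n < m ∧ ε ≤ G (s n) (s n) (s m) := ⟨m0, hnm0, hge0⟩
      obtain ⟨hnm, hge⟩ := Nat.find_spec hex
      refine ⟨n, Nat.find hex, hkn, hnm, hge, ?_⟩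
      intro j hnj hjm
      have hj := Nat.find_min hex hjm
      push_neg at hj
      exact hj hnj
    choose nk mk hkn hnm hge hmin using hchoice
    have hp : ∀ k, nk k ≤ mk k - 1 := fun k => Nat.le_sub_one_of_lt (hnm k)
    have hp1 : ∀ k, mk k - 1 + 1 = mk k := fun k =>
      Nat.succ_pred_eq_of_pos (lt_of_le_of_lt (Nat.zero_le _) (hnm k))
    have hcp : ∀ k, G (s (nk k)) (s (nk k)) (s (mk k - 1)) < ε := by
      intro k
      rcases (hp k).lt_or_eq with h | h
      · exact hmin k _ h (Nat.sub_lt (lt_of_le_of_lt (Nat.zero_le _) (hnm k)) one_pos)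
      · rw [← h, hG.eq_zero_of_eq]; exact hε
    have hub2 : ∀ k, G (s (nk k)) (s (nk k)) (s (mk k)) ≤ ε + 2 * a (mk k - 1) := by
      intro k
      have e0 : G (s (nk k)) (s (nk k)) (s (mk k)) = G (s (mk k)) (s (nk k)) (s (nk k)) :=
        cyc2 _ _ _
      have r1 := R (s (mk k)) (s (nk k)) (s (nk k)) (s (mk k - 1))
      have e1 : G (s (mk k)) (s (mk k - 1)) (s (mk k - 1)) =
          G (s (mk k - 1)) (s (mk k - 1)) (s (mk k)) := cyc _ _ _
      have e2 : G (s (mk k - 1)) (s (mk k - 1)) (s (mk k)) ≤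
          2 * G (s (mk k - 1)) (s (mk k)) (s (mk k)) := D2 _ _
      have e3' : s (mk k - 1 + 1) = s (mk k) := by rw [hp1 k]
      have e3 : G (s (mk k - 1)) (s (mk k)) (s (mk k)) = a (mk k - 1) := by
        rw [← e3']
      have e4 : G (s (mk k - 1)) (s (nk k)) (s (nk k)) =
          G (s (nk k)) (s (nk k)) (s (mk k - 1)) := cyc _ _ _
      have e5 := hcp k
      linarith [e1.le, e1.ge, e3.le, e3.ge, e4.le, e4.ge, e0.le, e0.ge]
    obtain ⟨cφ, hcφ, hcmin⟩ := phi_min hφ hε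
      (by linarith [anneg 0] : ε ≤ ε + 10 * a 0)
    have hkey2 : ∀ k, a k < ε / 5 → ψ (ε - 3 * a k) + cφ ≤ ψ (ε + 10 * a k) := by
      intro k hq
      set n := nk k with hn_def
      set m := mk k with hm_def
      have hakn : a n ≤ a k := adec (hkn k)
      have hakn1 : a (n + 1) ≤ a k := adec (le_trans (hkn k) (Nat.le_succ n))
      have hakp : a (m - 1) ≤ a k := adec (le_trans (hkn k) (hp k))
      have hakm : a m ≤ a k := adec (le_trans (hkn k) (hnm k).le)
      have hcub : G (s n) (s n) (s m) ≤ ε + 2 * a k := le_trans (hub2 k) (by linarith)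
      have hgek : ε ≤ G (s n) (s n) (s m) := hge k
      have hc'eq : G (s m) (s n) (s n) = G (s n) (s n) (s m) := cyc _ _ _
      -- distinctness facts
      have hne1 : s (n + 1) ≠ s m := by
        intro h
        have e : G (s n) (s n) (s m) = G (s n) (s n) (s (n + 1)) := by rw [h]
        have := D2 (s n) (s (n + 1))
        have e2 : G (s n) (s (n + 1)) (s (n + 1)) = a n := rfl
        linarith [e.le, e.ge]
      have hne2 : s (m + 1) ≠ s (n + 2) := by
        intro h
        have r1 := R (s m) (s n) (s n) (s (m + 1))
        have e1 : G (s m) (s (m + 1)) (s (m + 1)) = a m := rfl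
        have r2 := R (s (m + 1)) (s n) (s n) (s (n + 1))
        have e2 : G (s (m + 1)) (s (n + 1)) (s (n + 1)) = G (s (n + 2)) (s (n + 1)) (s (n + 1)) := by rw [h]
        have e3 : G (s (n + 2)) (s (n + 1)) (s (n + 1)) = G (s (n + 1)) (s (n + 1)) (s (n + 2)) := cyc _ _ _
        have e4 := D2 (s (n + 1)) (s (n + 2))
        have e5 : G (s (n + 1)) (s (n + 2)) (s (n + 2)) = a (n + 1) := rfl
        have e6 : G (s (n + 1)) (s n) (s n) = G (s n) (s n) (s (n + 1)) := cyc _ _ _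
        have e7 := D2 (s n) (s (n + 1))
        have e8 : G (s n) (s (n + 1)) (s (n + 1)) = a n := rfl
        linarith [e2.le, e2.ge, e3.le, e3.ge, e6.le, e6.ge, hc'eq.le, hc'eq.ge]
      -- lower bound for L
      have hLlow : ε - 3 * a k ≤ G (s (n + 1)) (s (m + 1)) (s (n + 2)) := by
        have r1 := R (s m) (s n) (s n) (s (m + 1))
        have e1 : G (s m) (s (m + 1)) (s (m + 1)) = a m := rfl
        have r2 := R (s (m + 1)) (s n) (s n) (s (n + 1))
        have e2 : G (s (m + 1)) (s (n + 1)) (s (n + 1)) = G (s (n + 1)) (s (n + 1)) (s (m + 1)) := cyc _ _ _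
        have e3 := hG.le_of_ne (s (n + 1)) (s (m + 1)) (s (n + 2)) hne2
        have e6 : G (s (n + 1)) (s n) (s n) = G (s n) (s n) (s (n + 1)) := cyc _ _ _
        have e7 := D2 (s n) (s (n + 1))
        have e8 : G (s n) (s (n + 1)) (s (n + 1)) = a n := rfl
        linarith [e2.le, e2.ge, e6.le, e6.ge, hc'eq.le, hc'eq.ge]
      -- bounds for N
      have hw : G (s (n + 1)) (s (n + 1)) (s m) ≤ G (s n) (s n) (s m) + a n := by
        have e0 : G (s (n + 1)) (s (n + 1)) (s m) = G (s m) (s (n + 1)) (s (n + 1)) := cyc2 _ _ _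
        have r1 := R (s m) (s (n + 1)) (s (n + 1)) (s n)
        have e1 : G (s n) (s (n + 1)) (s (n + 1)) = a n := rfl
        linarith [e0.le, e0.ge, hc'eq.le, hc'eq.ge]
      have ht1 : G (s n) (s (n + 1)) (s m) ≤ G (s n) (s n) (s m) + 2 * a n := by
        have r1 := R (s n) (s (n + 1)) (s m) (s (n + 1))
        have e1 : G (s n) (s (n + 1)) (s (n + 1)) = a n := rfl
        linarith
      have hv : G (s n) (s (n + 2)) (s (m + 1)) ≤ G (s n) (s n) (s m) + 6 * a k := by
        have r1 := R (s n) (s (n + 2)) (s (m + 1)) (s (n + 2))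
        have r2 := R (s n) (s (n + 2)) (s (n + 2)) (s (n + 1))
        have e1 : G (s n) (s (n + 1)) (s (n + 1)) = a n := rfl
        have e2 : G (s (n + 1)) (s (n + 2)) (s (n + 2)) = a (n + 1) := rfl
        have e3 : G (s (n + 2)) (s (n + 2)) (s (m + 1)) = G (s (m + 1)) (s (n + 2)) (s (n + 2)) := cyc2 _ _ _
        have r3 := R (s (m + 1)) (s (n + 2)) (s (n + 2)) (s m)
        have e4 : G (s (m + 1)) (s m) (s m) = G (s m) (s m) (s (m + 1)) := cyc _ _ _
        have e5 := D2 (s m) (s (m + 1))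
        have e6 : G (s m) (s (m + 1)) (s (m + 1)) = a m := rfl
        have r4 := R (s m) (s (n + 2)) (s (n + 2)) (s (n + 1))
        have r5 := R (s m) (s (n + 1)) (s (n + 1)) (s n)
        linarith [e3.le, e3.ge, e4.le, e4.ge, hc'eq.le, hc'eq.ge]
      have hNup : Nfun G T (s n) (s m) ≤ ε + 10 * a k := by
        rw [hNeq n m]
        have e1 : G (s m) (s (m + 1)) (s (m + 1)) = a m := rfl
        apply max_le (by linarith)
        apply max_le (by linarith)
        apply max_le (by rw [e1]; linarith)
        linarith [hw, hv]
      have hNlow : ε ≤ Nfun G T (s n) (s m) := by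
        rw [hNeq n m]
        have e1 := hG.le_of_ne (s n) (s m) (s (n + 1)) hne1.symm
        have e2 : G (s n) (s m) (s (n + 1)) = G (s n) (s (n + 1)) (s m) := swr _ _ _
        exact le_trans (by linarith [e2.le, e2.ge]) (le_max_left _ _)
      have hφN := hcmin _ ⟨hNlow, by linarith [adec (Nat.zero_le k)]⟩
      have hk := key n m (hnm k).le
      have hψL : ψ (ε - 3 * a k) ≤ ψ (G (s (n + 1)) (s (m + 1)) (s (n + 2))) :=
        PSm _ _ (by linarith) hLlow
      have hψN : ψ (Nfun G T (s n) (s m)) ≤ ψ (ε + 10 * a k) :=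
        PSm _ _ (hNnn n m) hNup
      linarith
    have hQ : ∀ᶠ k in atTop, a k < ε / 5 :=
      a0.eventually_lt_const (by positivity)
    have hIci1 : ∀ᶠ k in atTop, ε - 3 * a k ∈ Ici (0:ℝ) :=
      hQ.mono fun k hk => by simp only [mem_Ici]; linarith
    have base1 : Tendsto (fun k => ε - 3 * a k) atTop (𝓝 ε) := by
      have := tendsto_const_nhds (x := ε) (f := atTop (α := ℕ)) |>.sub (a0.const_mul 3)
      simpa using this
    have base2 : Tendsto (fun k => ε + 10 * a k) atTop (𝓝 ε) := by
      have := tendsto_const_nhds (x := ε) (f := atTop (α := ℕ)) |>.add (a0.const_mul 10)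
      simpa using this
    have hcw : ContinuousWithinAt ψ (Ici 0) ε := hψ.1 ε hε.le
    have htl : Tendsto (fun k => ψ (ε - 3 * a k)) atTop (𝓝 (ψ ε)) :=
      hcw.tendsto.comp (tendsto_nhdsWithin_iff.mpr ⟨base1, hIci1⟩)
    have htu : Tendsto (fun k => ψ (ε + 10 * a k)) atTop (𝓝 (ψ ε)) :=
      hcw.tendsto.comp (tendsto_nhdsWithin_iff.mpr
        ⟨base2, Eventually.of_forall fun k => by simp only [mem_Ici]; linarith [anneg k]⟩)
    have hfin : ψ ε + cφ ≤ ψ ε :=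
      le_of_tendsto_of_tendsto (htl.add tendsto_const_nhds) htu
        (hQ.mono fun k hk => hkey2 k hk)
    linarith
  -- assemble G-Cauchy
  have cauchy : GCauchy G s := by
    intro ε hε
    obtain ⟨N, hN⟩ := claimS (ε / 7) (by positivity)
    have hcc : ∀ n m, N ≤ n → N ≤ m → G (s n) (s n) (s m) ≤ 2 * (ε / 7) := by
      intro n m hn hm
      rcases lt_trichotomy n m with h | h | h
      · linarith [hN n m hn h, nn (s n) (s n) (s m)]
      · subst h; rw [hG.eq_zero_of_eq]; positivity
      · have h1 := hN m n hm h
        have h2 : G (s n) (s n) (s m) ≤ 2 * G (s n) (s m) (s m) := D2 _ _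
        have h3 : G (s n) (s m) (s m) = G (s m) (s m) (s n) := cyc _ _ _
        linarith
    refine ⟨N, fun n hn m hm l hl => ?_⟩
    have h1 : G (s n) (s m) (s l) ≤ G (s n) (s m) (s m) + G (s m) (s m) (s l) :=
      R (s n) (s m) (s l) (s m)
    have h2 : G (s n) (s m) (s m) ≤ 2 * G (s n) (s n) (s m) := D2' _ _
    have h3 := hcc n m hn hm
    have h4 := hcc m l hm hl
    linarith
  obtain ⟨xs, hxs⟩ := hcomp s cauchy
  set g : ℕ → ℝ := fun n => G xs (s n) (s n) with hg_def
  have hgt : Tendsto g atTop (𝓝 0) := hxs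
  have g1 : Tendsto (fun n => g (n + 1)) atTop (𝓝 0) := hgt.comp (tendsto_add_atTop_nat 1)
  have g2 : Tendsto (fun n => g (n + 2)) atTop (𝓝 0) := hgt.comp (tendsto_add_atTop_nat 2)
  have gnneg : ∀ n, 0 ≤ g n := fun n => nn _ _ _
  rcases hcases with hTc | hreg
  · -- T is G-continuous
    have h2 := hTc s xs hxs
    have h3 : Tendsto (fun n => G (T xs) (s (n + 1)) (s (n + 1))) atTop (𝓝 0) := by
      simp only [GConvergesTo] at h2
      simpa only [← hs] using h2
    refine ⟨xs, ?_⟩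
    have hb : ∀ n, G (T xs) xs xs ≤ G (T xs) (s (n + 1)) (s (n + 1)) + 2 * g (n + 1) := by
      intro n
      have r1 := R (T xs) xs xs (s (n + 1))
      have r2 : G (s (n + 1)) xs xs ≤ 2 * G (s (n + 1)) (s (n + 1)) xs := D2' _ _
      have r3 : G (s (n + 1)) (s (n + 1)) xs = g (n + 1) := cyc2 _ _ _
      linarith
    have ht : Tendsto (fun n => G (T xs) (s (n + 1)) (s (n + 1)) + 2 * g (n + 1))
        atTop (𝓝 0) := by
      simpa using h3.add (g1.const_mul 2)
    have hzero : G (T xs) xs xs ≤ 0 := ge_of_tendsto' ht hb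
    exact Gaux.eq_of_zero hG hzero
  · -- regular non-decreasing
    have hle : ∀ n, s n ≤ xs := hreg s xs mono hxs
    refine ⟨xs, ?_⟩
    by_contra hfx
    have hρ : 0 < G xs (T xs) (T xs) :=
      Gaux.pos_gyy hG (fun h => hfx h.symm)
    set ρ := G xs (T xs) (T xs) with hρ_def
    have key3 : ∀ n, ψ (G (s (n + 1)) (T xs) (s (n + 2))) ≤
        ψ (Nfun G T (s n) xs) - φ (Nfun G T (s n) xs) := by
      intro n
      have hc := hcontr (s n) xs (hle n)
      rwa [← hs n, ← hs (n + 1)] at hc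
    have hNeq' : ∀ n, Nfun G T (s n) xs =
        max (G (s n) (s (n + 1)) xs) (max (a (n + 1))
          (max ((a n + ρ) / 2)
            ((G (s n) (s (n + 2)) (T xs) + G (s (n + 1)) (s (n + 1)) xs) / 2))) := by
      intro n
      simp only [Nfun, ← hs n, ← hs (n + 1), ha_def, hρ_def]
    set u : ℕ → ℝ := fun n => 2 * g n + 2 * g (n + 1) + 2 * g (n + 2) + a n + a (n + 1)
      with hu_def
    have unneg : ∀ n, 0 ≤ u n := fun n => by
      simp only [hu_def]
      have := gnneg n; have := gnneg (n + 1); have := gnneg (n + 2)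
      have := anneg n; have := anneg (n + 1); positivity
    have hgyy : ∀ n, G (s n) xs xs ≤ 2 * g n := by
      intro n
      have h1 : G (s n) xs xs ≤ 2 * G (s n) (s n) xs := D2' _ _
      have h2 : G (s n) (s n) xs = g n := cyc2 _ _ _
      linarith
    have hNup' : ∀ n, Nfun G T (s n) xs ≤ ρ + u n := by
      intro n
      rw [hNeq' n]
      have ht1 : G (s n) (s (n + 1)) xs ≤ 2 * g n + 2 * g (n + 1) := by
        have r1 := R (s n) (s (n + 1)) xs xs
        have e1 : G xs (s (n + 1)) xs = G xs xs (s (n + 1)) := swr _ _ _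
        have e2 : G xs xs (s (n + 1)) ≤ 2 * G xs (s (n + 1)) (s (n + 1)) := D2 _ _
        have := hgyy n
        linarith [e1.le, e1.ge]
      have ht4b : G (s (n + 1)) (s (n + 1)) xs = g (n + 1) := cyc2 _ _ _
      have ht4a : G (s n) (s (n + 2)) (T xs) ≤ 2 * g n + 2 * ρ + 2 * g (n + 2) := by
        have r1 := R (s n) (s (n + 2)) (T xs) xs
        have r2 := R xs (s (n + 2)) (T xs) (T xs)
        have e1 : G (T xs) (s (n + 2)) (T xs) = G (T xs) (T xs) (s (n + 2)) := swr _ _ _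
        have e2 : G (T xs) (T xs) (s (n + 2)) = G (s (n + 2)) (T xs) (T xs) := cyc2 _ _ _
        have r3 := R (s (n + 2)) (T xs) (T xs) xs
        have e3 : G (s (n + 2)) xs xs ≤ 2 * g (n + 2) := hgyy (n + 2)
        have := hgyy n
        linarith [e1.le, e1.ge, e2.le, e2.ge]
      have hm1 : G (s n) (s (n + 1)) xs ≤ ρ + u n := by
        simp only [hu_def]
        linarith [anneg n, anneg (n + 1), gnneg (n + 2), hρ.le]
      have hm2 : a (n + 1) ≤ ρ + u n := by
        simp only [hu_def]
        linarith [gnneg n, gnneg (n + 1), gnneg (n + 2), anneg n, hρ.le]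
      have hm3 : (a n + ρ) / 2 ≤ ρ + u n := by
        simp only [hu_def]
        linarith [gnneg n, gnneg (n + 1), gnneg (n + 2), anneg n, anneg (n + 1), hρ.le]
      have hm4 : (G (s n) (s (n + 2)) (T xs) + G (s (n + 1)) (s (n + 1)) xs) / 2 ≤ ρ + u n := by
        rw [ht4b]
        simp only [hu_def]
        linarith [gnneg n, gnneg (n + 1), gnneg (n + 2), anneg n, anneg (n + 1), hρ.le, ht4a]
      exact max_le hm1 (max_le hm2 (max_le hm3 hm4))
    have hNlow' : ∀ n, ρ / 2 ≤ Nfun G T (s n) xs := by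
      intro n
      rw [hNeq' n]
      have : ρ / 2 ≤ (a n + ρ) / 2 := by linarith [anneg n]
      exact le_trans this (le_trans (le_max_left _ _) (le_trans (le_max_right _ _)
        (le_max_right _ _)))
    have hLlow' : ∀ n, ρ - g (n + 1) ≤ G (s (n + 1)) (T xs) (s (n + 2)) := by
      intro n
      have r1 := R xs (T xs) (T xs) (s (n + 1))
      have e1 : G (s (n + 1)) (T xs) (T xs) = G (T xs) (T xs) (s (n + 1)) := cyc _ _ _
      have e2 := hG.le_of_ne (T xs) (s (n + 1)) (s (n + 2)) (hne (n + 1))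
      have e3 : G (T xs) (s (n + 1)) (s (n + 2)) = G (s (n + 1)) (T xs) (s (n + 2)) :=
        swl _ _ _
      have e4 : G xs (s (n + 1)) (s (n + 1)) = g (n + 1) := rfl
      linarith [e1.le, e1.ge, e3.le, e3.ge]
    obtain ⟨cφ, hcφ, hcmin⟩ := phi_min hφ (half_pos hρ) (show ρ / 2 ≤ ρ + 1 by linarith)
    have utend : Tendsto u atTop (𝓝 0) := by
      have : Tendsto (fun n => 2 * g n + 2 * g (n + 1) + 2 * g (n + 2) + a n + a (n + 1))
          atTop (𝓝 (2 * 0 + 2 * 0 + 2 * 0 + 0 + 0)) := by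
        exact ((((hgt.const_mul 2).add (g1.const_mul 2)).add (g2.const_mul 2)).add a0).add
          (a0.comp (tendsto_add_atTop_nat 1))
      simpa using this
    have hE1 : ∀ᶠ n in atTop, u n < 1 := utend.eventually_lt_const one_pos
    have hE2 : ∀ᶠ n in atTop, g (n + 1) < ρ / 2 := g1.eventually_lt_const (half_pos hρ)
    have hkey4 : ∀ n, u n < 1 → g (n + 1) < ρ / 2 →
        ψ (ρ - g (n + 1)) + cφ ≤ ψ (ρ + u n) := by
      intro n h1 h2
      have hmem : Nfun G T (s n) xs ∈ Icc (ρ / 2) (ρ + 1) :=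
        ⟨hNlow' n, le_trans (hNup' n) (by linarith)⟩
      have hφN := hcmin _ hmem
      have hk := key3 n
      have hψL : ψ (ρ - g (n + 1)) ≤ ψ (G (s (n + 1)) (T xs) (s (n + 2))) :=
        PSm _ _ (by linarith) (hLlow' n)
      have hψN : ψ (Nfun G T (s n) xs) ≤ ψ (ρ + u n) :=
        PSm _ _ (le_trans (by linarith : (0:ℝ) ≤ ρ / 2) (hNlow' n)) (hNup' n)
      linarith
    have base1 : Tendsto (fun n => ρ - g (n + 1)) atTop (𝓝 ρ) := by
      have := tendsto_const_nhds (x := ρ) (f := atTop (α := ℕ)) |>.sub g1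
      simpa using this
    have base2 : Tendsto (fun n => ρ + u n) atTop (𝓝 ρ) := by
      have := tendsto_const_nhds (x := ρ) (f := atTop (α := ℕ)) |>.add utend
      simpa using this
    have hcw : ContinuousWithinAt ψ (Ici 0) ρ := hψ.1 ρ hρ.le
    have htl : Tendsto (fun n => ψ (ρ - g (n + 1))) atTop (𝓝 (ψ ρ)) :=
      hcw.tendsto.comp (tendsto_nhdsWithin_iff.mpr
        ⟨base1, hE2.mono fun n hn => by simp only [mem_Ici]; linarith⟩)
    have htu : Tendsto (fun n => ψ (ρ + u n)) atTop (𝓝 (ψ ρ)) :=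
      hcw.tendsto.comp (tendsto_nhdsWithin_iff.mpr
        ⟨base2, Eventually.of_forall fun n => by simp only [mem_Ici]; linarith [unneg n]⟩)
    have hfin : ψ ρ + cφ ≤ ψ ρ :=
      le_of_tendsto_of_tendsto (htl.add tendsto_const_nhds) htu
        ((hE1.and hE2).mono fun n hn => hkey4 n hn.1 hn.2)
    linarith
end

section
/- Let (X,⪯,G) be a G-complete partially ordered G-metric space and let T : X → X be a map that is non-decreasing with respect to ⪯ and satisfies x₀ ⪯ T x₀ for some x₀ ∈ X. Suppose there exist ψ ∈ Ψ and φ ∈ Φ such that for all x, y ∈ X with x ⪯ y, ψ(G(Tx,T²x,Ty)) ≤ ψ(G(x,Tx,y)) − φ(G(x,Tx,y)). If either T is G-continuous or (X,⪯,G) is regular non-decreasing, then T has a fixed point in X. -/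
open Filter Topology Set

section helpers

variable {X : Type*} {G : X → X → X → ℝ}

lemma gcyc (hG : IsGMetric G) (a b c : X) : G a b c = G b c a := by
  rw [hG.swap_left a b c, hG.swap_right b a c]

lemma rho_triangle (hG : IsGMetric G) (a b c : X) : G a c c ≤ G a b b + G b c c :=
  hG.rect a c c b

lemma rho_symm2 (hG : IsGMetric G) (a b : X) : G a b b ≤ 2 * G b a a := by
  have h1 : G a b b = G b a b := hG.swap_left a b b
  have h2 : G b a b ≤ G b a a + G a a b := hG.rect b a b a
  have h3 : G a a b = G b a a := by rw [gcyc hG a a b, gcyc hG a b a]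
  linarith

lemma rho_pos (hG : IsGMetric G) (a b : X) (h : a ≠ b) : 0 < G a b b := by
  rw [gcyc hG a b b]
  exact hG.pos_of_ne b a (Ne.symm h)

lemma rho_le_G (hG : IsGMetric G) (u v z : X) (h : u ≠ z) : G u v v ≤ G v u z := by
  rw [gcyc hG u v v]
  exact hG.le_of_ne v u z h

lemma eq_of_rho_nonpos (hG : IsGMetric G) (a b : X) (h : G a b b ≤ 0) : a = b := by
  by_contra hne
  exact absurd h (not_le.mpr (rho_pos hG a b hne))

end helpers
theorem stmt8 {X : Type*} [Nonempty X] [PartialOrder X] (G : X → X → X → ℝ)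
    (hG : IsGMetric G) (hcomp : GComplete G) (T : X → X) (hTmono : Monotone T)
    (x₀ : X) (hx₀ : x₀ ≤ T x₀)
    (ψ φ : ℝ → ℝ) (hψ : MemPsi ψ) (hφ : MemPhi φ)
    (hcontr : ∀ x y : X, x ≤ y →
      ψ (G (T x) (T (T x)) (T y)) ≤ ψ (G x (T x) y) - φ (G x (T x) y))
    (hcases : GContinuousMap G T ∨ RegularNondecreasing G) :
    ∃ x : X, T x = x := by
  classical
  obtain ⟨hψc, hψm, hψ0, hψz⟩ := hψ
  obtain ⟨hφc, hφ0, hφz⟩ := hφ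
  -- the Picard sequence
  set s : ℕ → X := fun n => T^[n] x₀ with hsdef
  have hss : ∀ n, s (n + 1) = T (s n) := fun n => Function.iterate_succ_apply' T n x₀
  have hstep : ∀ n, s n ≤ s (n + 1) := by
    intro n
    induction n with
    | zero =>
      have h0 : s 0 = x₀ := rfl
      rw [hss 0, h0]
      exact hx₀
    | succ n ih =>
      have := hTmono ih
      rw [← hss n, ← hss (n + 1)] at this
      exact this
  have hmono : Monotone s := monotone_nat_of_le_succ hstep
  by_cases hfix : ∃ n, T (s n) = s n
  · obtain ⟨n, hn⟩ := hfix
    exact ⟨s n, hn⟩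
  push_neg at hfix
  have hne : ∀ n, s (n + 1) ≠ s n := fun n => by rw [hss n]; exact hfix n
  -- auxiliary facts about ψ and φ
  have hφpos : ∀ t : ℝ, 0 < t → 0 < φ t := by
    intro t ht
    rcases lt_or_eq_of_le (hφ0 t ht.le) with h | h
    · exact h
    · exact absurd ((hφz t ht.le).mp h.symm) ht.ne'
  have hψtend : ∀ (u : ℕ → ℝ) (L : ℝ), (∀ n, 0 ≤ u n) → 0 ≤ L →
      Filter.Tendsto u atTop (𝓝 L) →
      Filter.Tendsto (fun n => ψ (u n)) atTop (𝓝 (ψ L)) := by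
    intro u L hu hL htu
    have h1 : Filter.Tendsto u atTop (𝓝[Set.Ici (0:ℝ)] L) :=
      tendsto_nhdsWithin_of_tendsto_nhds_of_eventually_within u htu
        (Filter.Eventually.of_forall hu)
    exact (hψc L hL).tendsto.comp h1
  have hφlsc : ∀ (u : ℕ → ℝ) (L : ℝ), (∀ n, 0 ≤ u n) → 0 ≤ L →
      Filter.Tendsto u atTop (𝓝 L) → ∀ c < φ L, ∀ᶠ n in atTop, c < φ (u n) := by
    intro u L hu hL htu c hc
    have h1 : Filter.Tendsto u atTop (𝓝[Set.Ici (0:ℝ)] L) :=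
      tendsto_nhdsWithin_of_tendsto_nhds_of_eventually_within u htu
        (Filter.Eventually.of_forall hu)
    exact h1.eventually ((hφc L hL) c hc)
  -- the contraction along the sequence
  have hcon : ∀ n m : ℕ, n ≤ m →
      ψ (G (s (n+1)) (s (n+1+1)) (s (m+1))) ≤
        ψ (G (s n) (s (n+1)) (s m)) - φ (G (s n) (s (n+1)) (s m)) := by
    intro n m h
    have hc := hcontr (s n) (s m) (hmono h)
    rw [← hss n, ← hss (n+1), ← hss m] at hc
    exact hc
  -- d n
  let d : ℕ → ℝ := fun n => G (s n) (s (n+1)) (s (n+1))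
  have hdval : ∀ n, d n = G (s n) (s (n+1)) (s (n+1)) := fun n => rfl
  have hdnneg : ∀ n, 0 ≤ d n := fun n => hG.nonneg _ _ _
  have hd0 : ∀ n, 0 < d n := fun n => rho_pos hG _ _ (Ne.symm (hne n))
  have hcond : ∀ n, ψ (d (n+1)) ≤ ψ (d n) - φ (d n) := fun n =>
    hcon n (n+1) (Nat.le_succ n)
  have hdlt : ∀ n, d (n+1) < d n := by
    intro n
    by_contra hge
    push_neg at hge
    have h1 : ψ (d n) ≤ ψ (d (n+1)) := hψm (hdnneg n) (hdnneg (n+1)) hge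
    have h2 := hφpos (d n) (hd0 n)
    linarith [hcond n]
  have hanti : Antitone d := antitone_nat_of_succ_le fun n => (hdlt n).le
  have hbdd : BddBelow (Set.range d) := ⟨0, fun y ⟨n, hn⟩ => hn ▸ hdnneg n⟩
  have hdtendL : Filter.Tendsto d atTop (𝓝 (⨅ n, d n)) := tendsto_atTop_ciInf hanti hbdd
  have hL0 : 0 ≤ ⨅ n, d n := le_ciInf hdnneg
  have hLzero : (⨅ n, d n) = 0 := by
    by_contra hLne
    have hLpos : 0 < ⨅ n, d n := hL0.lt_of_ne (Ne.symm hLne)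
    have ht1 : Filter.Tendsto (fun n => ψ (d n)) atTop (𝓝 (ψ (⨅ n, d n))) :=
      hψtend d _ hdnneg hL0 hdtendL
    have ht2 : Filter.Tendsto (fun n => ψ (d (n+1))) atTop (𝓝 (ψ (⨅ n, d n))) :=
      hψtend (fun n => d (n+1)) _ (fun n => hdnneg (n+1)) hL0
        (hdtendL.comp (tendsto_add_atTop_nat 1))
    have hdiff : Filter.Tendsto (fun n => ψ (d n) - ψ (d (n+1))) atTop (𝓝 0) := by
      have := ht1.sub ht2
      simpa using this
    have hev1 : ∀ᶠ n in atTop, φ (⨅ n, d n) / 2 < φ (d n) :=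
      hφlsc d _ hdnneg hL0 hdtendL _ (by linarith [hφpos _ hLpos])
    have hev2 : ∀ᶠ n in atTop, ψ (d n) - ψ (d (n+1)) < φ (⨅ n, d n) / 2 :=
      hdiff.eventually_lt_const (by linarith [hφpos _ hLpos])
    obtain ⟨n, h1, h2⟩ := (hev1.and hev2).exists
    linarith [hcond n]
  have hdtend : Filter.Tendsto d atTop (𝓝 0) := hLzero ▸ hdtendL
  -- Step 2 : the sequence is G-Cauchy
  have hcauchy : GCauchy G s := by
    by_contra hnc
    unfold GCauchy at hnc
    push_neg at hnc
    obtain ⟨ε, hε, hnc⟩ := hnc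
    set δ := ε / 4 with hδdef
    have hδpos : 0 < δ := by positivity
    have key : ∀ N : ℕ, ∃ p q, N ≤ p ∧ p < q ∧ δ ≤ G (s p) (s q) (s q) := by
      intro N
      obtain ⟨n, hn, m, hm, l, hl, hGe⟩ := hnc N
      have h1 : G (s n) (s m) (s l) ≤ G (s n) (s m) (s m) + G (s m) (s m) (s l) :=
        hG.rect (s n) (s m) (s l) (s m)
      have h2 : G (s m) (s m) (s l) = G (s l) (s m) (s m) := by
        rw [gcyc hG (s m) (s m) (s l), gcyc hG (s m) (s l) (s m)]
      have pairc : ∀ p q : ℕ, N ≤ p → N ≤ q → ε / 2 ≤ G (s p) (s q) (s q) →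
          ∃ a b, N ≤ a ∧ a < b ∧ δ ≤ G (s a) (s b) (s b) := by
        intro p q hp hq hpq
        rcases lt_trichotomy p q with h | h | h
        · exact ⟨p, q, hp, h, by linarith⟩
        · subst h
          have h0 := hG.eq_zero_of_eq (s p)
          linarith
        · have h2s := rho_symm2 hG (s p) (s q)
          exact ⟨q, p, hq, h, by linarith⟩
      rcases le_or_gt (ε / 2) (G (s n) (s m) (s m)) with h | h
      · exact pairc n m hn hm h
      · exact pairc l m hl hm (by linarith)
    choose nk qk hnk hnq hδq using key
    have hex : ∀ k : ℕ, ∃ m, nk k < m ∧ δ ≤ G (s (nk k)) (s m) (s m) :=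
      fun k => ⟨qk k, hnq k, hδq k⟩
    let mk : ℕ → ℕ := fun k => Nat.find (hex k)
    have hmk1 : ∀ k, nk k < mk k := fun k => (Nat.find_spec (hex k)).1
    have hmk2 : ∀ k, δ ≤ G (s (nk k)) (s (mk k)) (s (mk k)) := fun k =>
      (Nat.find_spec (hex k)).2
    have hmkpos : ∀ k, 0 < mk k := fun k => lt_of_le_of_lt (Nat.zero_le _) (hmk1 k)
    have hmksub : ∀ k, mk k - 1 + 1 = mk k := fun k => Nat.succ_pred_eq_of_pos (hmkpos k)
    have hmk3 : ∀ k, G (s (nk k)) (s (mk k - 1)) (s (mk k - 1)) < δ := by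
      intro k
      rcases Nat.lt_or_ge (nk k) (mk k - 1) with h | h
      · have hlt : mk k - 1 < mk k := Nat.sub_lt (hmkpos k) one_pos
        have hnot := Nat.find_min (hex k) hlt
        push_neg at hnot
        exact hnot h
      · have heq : mk k - 1 = nk k := le_antisymm h (Nat.le_sub_one_of_lt (hmk1 k))
        rw [heq]
        have h0 := hG.eq_zero_of_eq (s (nk k))
        linarith
    have hnele : ∀ k, k ≤ mk k - 1 := fun k => le_trans (hnk k) (Nat.le_sub_one_of_lt (hmk1 k))
    have htnk : Filter.Tendsto nk atTop atTop := tendsto_atTop_mono hnk tendsto_id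
    have htmk1 : Filter.Tendsto (fun k => mk k - 1) atTop atTop :=
      tendsto_atTop_mono hnele tendsto_id
    have htmk : Filter.Tendsto mk atTop atTop :=
      tendsto_atTop_mono (fun k => le_trans (hnk k) (hmk1 k).le) tendsto_id
    -- r k → δ
    let r : ℕ → ℝ := fun k => G (s (nk k)) (s (mk k)) (s (mk k))
    have hrub : ∀ k, r k ≤ δ + d (mk k - 1) := by
      intro k
      have h1 := rho_triangle hG (s (nk k)) (s (mk k - 1)) (s (mk k))
      have h2 : G (s (mk k - 1)) (s (mk k)) (s (mk k)) = d (mk k - 1) := by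
        rw [hdval, hmksub k]
      have h3 := hmk3 k
      show G (s (nk k)) (s (mk k)) (s (mk k)) ≤ δ + d (mk k - 1)
      linarith
    have hrtend : Filter.Tendsto r atTop (𝓝 δ) := by
      refine tendsto_of_tendsto_of_tendsto_of_le_of_le
        (tendsto_const_nhds) ?_ hmk2 hrub
      have := (tendsto_const_nhds : Filter.Tendsto (fun _ : ℕ => δ) atTop (𝓝 δ)).add
        (hdtend.comp htmk1)
      simpa using this
    -- A k → δ
    let A : ℕ → ℝ := fun k => G (s (nk k)) (s (nk k + 1)) (s (mk k))
    have hAlb : ∀ k, r k ≤ A k := by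
      intro k
      have h1 := rho_le_G hG (s (nk k)) (s (mk k)) (s (nk k + 1)) (Ne.symm (hne (nk k)))
      have h2 : G (s (mk k)) (s (nk k)) (s (nk k + 1)) = A k := by
        show _ = G (s (nk k)) (s (nk k + 1)) (s (mk k))
        rw [gcyc hG (s (mk k)) (s (nk k)) (s (nk k + 1))]
      rw [← h2]
      exact h1
    have hmkne : ∀ k, s (mk k) ≠ s (mk k - 1) := by
      intro k
      have := hne (mk k - 1)
      rwa [hmksub k] at this
    have hAub : ∀ k, A k ≤ 2 * d (nk k) + δ + 2 * d (mk k - 1) := by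
      intro k
      have e1 : G (s (nk k)) (s (nk k + 1)) (s (mk k)) =
          G (s (nk k + 1)) (s (nk k)) (s (mk k)) :=
        hG.swap_left (s (nk k)) (s (nk k + 1)) (s (mk k))
      have e2 : G (s (nk k + 1)) (s (nk k)) (s (mk k)) ≤
          G (s (nk k + 1)) (s (nk k)) (s (nk k)) + G (s (nk k)) (s (nk k)) (s (mk k)) :=
        hG.rect (s (nk k + 1)) (s (nk k)) (s (mk k)) (s (nk k))
      have e3 : G (s (nk k + 1)) (s (nk k)) (s (nk k)) ≤ 2 * d (nk k) :=
        rho_symm2 hG (s (nk k + 1)) (s (nk k))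
      have e4 : G (s (nk k)) (s (nk k)) (s (mk k)) ≤
          G (s (nk k)) (s (mk k)) (s (mk k - 1)) :=
        hG.le_of_ne (s (nk k)) (s (mk k)) (s (mk k - 1)) (hmkne k)
      have e5 : G (s (nk k)) (s (mk k)) (s (mk k - 1)) ≤
          G (s (nk k)) (s (mk k - 1)) (s (mk k - 1)) +
            G (s (mk k - 1)) (s (mk k)) (s (mk k - 1)) :=
        hG.rect (s (nk k)) (s (mk k)) (s (mk k - 1)) (s (mk k - 1))
      have e6 : G (s (mk k - 1)) (s (mk k)) (s (mk k - 1)) =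
          G (s (mk k)) (s (mk k - 1)) (s (mk k - 1)) := by
        rw [gcyc hG (s (mk k - 1)) (s (mk k)) (s (mk k - 1)),
          gcyc hG (s (mk k)) (s (mk k - 1)) (s (mk k - 1))]
      have e7 : G (s (mk k)) (s (mk k - 1)) (s (mk k - 1)) ≤
          2 * G (s (mk k - 1)) (s (mk k)) (s (mk k)) :=
        rho_symm2 hG (s (mk k)) (s (mk k - 1))
      have e8 : G (s (mk k - 1)) (s (mk k)) (s (mk k)) = d (mk k - 1) := by
        rw [hdval, hmksub k]
      have e9 := hmk3 k
      show G (s (nk k)) (s (nk k + 1)) (s (mk k)) ≤ 2 * d (nk k) + δ + 2 * d (mk k - 1)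
      linarith [e1, e2, e3, e4, e5, e6, e7, e8, e9]
    have hAtend : Filter.Tendsto A atTop (𝓝 δ) := by
      refine tendsto_of_tendsto_of_tendsto_of_le_of_le hrtend ?_ hAlb hAub
      have := ((hdtend.comp htnk).const_mul 2).add
        ((tendsto_const_nhds : Filter.Tendsto (fun _ : ℕ => δ) atTop (𝓝 δ)).add
          ((hdtend.comp htmk1).const_mul 2))
      have h' : Filter.Tendsto (fun k => 2 * d (nk k) + (δ + 2 * d (mk k - 1))) atTop
          (𝓝 δ) := by simpa using this
      simpa [add_assoc] using h'
    -- B k lower bound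
    let B : ℕ → ℝ := fun k => G (s (nk k + 1)) (s (nk k + 1 + 1)) (s (mk k + 1))
    have hBnneg : ∀ k, 0 ≤ B k := fun k => hG.nonneg _ _ _
    let c : ℕ → ℝ := fun k => δ - d (nk k) - d (nk k + 1) - 2 * d (mk k)
    have hBlb : ∀ k, c k ≤ B k := by
      intro k
      have t1 := rho_triangle hG (s (nk k)) (s (nk k + 1)) (s (mk k))
      have t2 := rho_triangle hG (s (nk k + 1)) (s (nk k + 1 + 1)) (s (mk k))
      have t3 := rho_triangle hG (s (nk k + 1 + 1)) (s (mk k + 1)) (s (mk k))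
      have t4 : G (s (mk k + 1)) (s (mk k)) (s (mk k)) ≤ 2 * d (mk k) :=
        rho_symm2 hG (s (mk k + 1)) (s (mk k))
      have t5 : G (s (nk k + 1 + 1)) (s (mk k + 1)) (s (mk k + 1)) ≤
          G (s (mk k + 1)) (s (nk k + 1 + 1)) (s (nk k + 1)) :=
        rho_le_G hG (s (nk k + 1 + 1)) (s (mk k + 1)) (s (nk k + 1))
          (hne (nk k + 1))
      have t6 : G (s (mk k + 1)) (s (nk k + 1 + 1)) (s (nk k + 1)) = B k := by
        show _ = G (s (nk k + 1)) (s (nk k + 1 + 1)) (s (mk k + 1))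
        rw [gcyc hG (s (mk k + 1)) (s (nk k + 1 + 1)) (s (nk k + 1)),
          gcyc hG (s (nk k + 1 + 1)) (s (nk k + 1)) (s (mk k + 1)),
          hG.swap_right (s (nk k + 1)) (s (mk k + 1)) (s (nk k + 1 + 1))]
      have t7 := hmk2 k
      have hd3 : d (mk k) = G (s (mk k)) (s (mk k + 1)) (s (mk k + 1)) := hdval _
      show δ - d (nk k) - d (nk k + 1) - 2 * d (mk k) ≤ B k
      rw [t6] at t5
      have hd1 : d (nk k) = G (s (nk k)) (s (nk k + 1)) (s (nk k + 1)) := hdval _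
      have hd2 : d (nk k + 1) = G (s (nk k + 1)) (s (nk k + 1 + 1)) (s (nk k + 1 + 1)) :=
        hdval _
      linarith [t1, t2, t3, t4, t5, t7, hd1, hd2, hd3]
    let c' : ℕ → ℝ := fun k => max 0 (c k)
    have hc'nneg : ∀ k, 0 ≤ c' k := fun k => le_max_left _ _
    have hc'le : ∀ k, c' k ≤ B k := fun k => max_le (hBnneg k) (hBlb k)
    have hctend : Filter.Tendsto c atTop (𝓝 δ) := by
      have := (((tendsto_const_nhds : Filter.Tendsto (fun _ : ℕ => δ) atTop (𝓝 δ)).sub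
        (hdtend.comp htnk)).sub
        ((hdtend.comp (tendsto_add_atTop_nat 1)).comp htnk)).sub
        ((hdtend.comp htmk).const_mul 2)
      simpa [Function.comp] using this
    have hc'tend : Filter.Tendsto c' atTop (𝓝 δ) := by
      have h1 := (tendsto_const_nhds : Filter.Tendsto (fun _ : ℕ => (0:ℝ)) atTop (𝓝 0)).max hctend
      rw [max_eq_right hδpos.le] at h1
      exact h1
    -- conclude
    have hψA : Filter.Tendsto (fun k => ψ (A k)) atTop (𝓝 (ψ δ)) :=
      hψtend A δ (fun k => hG.nonneg _ _ _) hδpos.le hAtend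
    have hψc' : Filter.Tendsto (fun k => ψ (c' k)) atTop (𝓝 (ψ δ)) :=
      hψtend c' δ hc'nneg hδpos.le hc'tend
    have hcontrk : ∀ k, ψ (B k) ≤ ψ (A k) - φ (A k) := fun k =>
      hcon (nk k) (mk k) (hmk1 k).le
    have hkey : ∀ k, φ (A k) ≤ ψ (A k) - ψ (c' k) := by
      intro k
      have h1 : ψ (c' k) ≤ ψ (B k) := hψm (hc'nneg k) (hBnneg k) (hc'le k)
      linarith [hcontrk k]
    have hdiff : Filter.Tendsto (fun k => ψ (A k) - ψ (c' k)) atTop (𝓝 0) := by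
      have := hψA.sub hψc'
      simpa using this
    have hev1 : ∀ᶠ k in atTop, φ δ / 2 < φ (A k) :=
      hφlsc A δ (fun k => hG.nonneg _ _ _) hδpos.le hAtend _ (by linarith [hφpos δ hδpos])
    have hev2 : ∀ᶠ k in atTop, ψ (A k) - ψ (c' k) < φ δ / 2 :=
      hdiff.eventually_lt_const (by linarith [hφpos δ hδpos])
    obtain ⟨k, h1, h2⟩ := (hev1.and hev2).exists
    linarith [hkey k]
  -- completeness
  obtain ⟨z, hz⟩ := hcomp s hcauchy
  have hzconv : Filter.Tendsto (fun n => G z (s n) (s n)) atTop (𝓝 0) := hz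
  have hzshift : Filter.Tendsto (fun n => G z (s (n+1)) (s (n+1))) atTop (𝓝 0) :=
    hzconv.comp (tendsto_add_atTop_nat 1)
  rcases hcases with hTc | hreg
  · -- continuous case
    have h1 : GConvergesTo G (fun n => T (s n)) (T z) := hTc s z hz
    have h2 : Filter.Tendsto (fun n => G (T z) (s (n+1)) (s (n+1))) atTop (𝓝 0) := by
      have h1' : Filter.Tendsto (fun n => G (T z) (T (s n)) (T (s n))) atTop (𝓝 0) := h1
      simp only [← hss] at h1'
      exact h1'
    have hub : ∀ n, G (T z) z z ≤
        G (T z) (s (n+1)) (s (n+1)) + 2 * G z (s (n+1)) (s (n+1)) := by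
      intro n
      have ht := rho_triangle hG (T z) (s (n+1)) z
      have hs2 := rho_symm2 hG (s (n+1)) z
      linarith
    have hlim : Filter.Tendsto
        (fun n => G (T z) (s (n+1)) (s (n+1)) + 2 * G z (s (n+1)) (s (n+1)))
        atTop (𝓝 0) := by
      have := h2.add (hzshift.const_mul 2)
      simpa using this
    have hle0 : G (T z) z z ≤ 0 := ge_of_tendsto' hlim hub
    exact ⟨z, eq_of_rho_nonpos hG (T z) z hle0⟩
  · -- regular case
    have hle : ∀ n, s n ≤ z := hreg s z hmono hz
    by_cases hfx : T z = z
    · exact ⟨z, hfx⟩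
    exfalso
    have hηpos : 0 < G z (T z) (T z) := rho_pos hG z (T z) (Ne.symm hfx)
    set η := G z (T z) (T z) with hηdef
    have hc2 : ∀ n, ψ (G (s (n+1)) (s (n+1+1)) (T z)) ≤
        ψ (G (s n) (s (n+1)) z) - φ (G (s n) (s (n+1)) z) := by
      intro n
      have hc := hcontr (s n) z (hle n)
      rw [← hss n, ← hss (n+1)] at hc
      exact hc
    -- A' n → 0
    let A' : ℕ → ℝ := fun n => G (s n) (s (n+1)) z
    have hA'ub : ∀ n, A' n ≤ d n + G z (s (n+1)) (s (n+1)) := by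
      intro n
      have e1 : G (s n) (s (n+1)) z ≤
          G (s n) (s (n+1)) (s (n+1)) + G (s (n+1)) (s (n+1)) z :=
        hG.rect (s n) (s (n+1)) z (s (n+1))
      have e2 : G (s (n+1)) (s (n+1)) z = G z (s (n+1)) (s (n+1)) := by
        rw [gcyc hG (s (n+1)) (s (n+1)) z, gcyc hG (s (n+1)) z (s (n+1))]
      have hd1 : d n = G (s n) (s (n+1)) (s (n+1)) := hdval n
      show G (s n) (s (n+1)) z ≤ d n + G z (s (n+1)) (s (n+1))
      rw [hd1]
      linarith
    have hA'tend : Filter.Tendsto A' atTop (𝓝 0) := by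
      refine tendsto_of_tendsto_of_tendsto_of_le_of_le
        (tendsto_const_nhds) ?_ (fun n => hG.nonneg _ _ _) hA'ub
      have := hdtend.add hzshift
      simpa using this
    -- B' n lower bound
    let B' : ℕ → ℝ := fun n => G (s (n+1)) (s (n+1+1)) (T z)
    have hB'nneg : ∀ n, 0 ≤ B' n := fun n => hG.nonneg _ _ _
    let c2 : ℕ → ℝ := fun n => η - G z (s (n+1)) (s (n+1)) - d (n+1)
    have hB'lb : ∀ n, c2 n ≤ B' n := by
      intro n
      have t1 := rho_triangle hG z (s (n+1)) (T z)
      have t2 := rho_triangle hG (s (n+1)) (s (n+1+1)) (T z)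
      have t3 : G (s (n+1+1)) (T z) (T z) ≤ G (T z) (s (n+1+1)) (s (n+1)) :=
        rho_le_G hG (s (n+1+1)) (T z) (s (n+1)) (hne (n+1))
      have t4 : G (T z) (s (n+1+1)) (s (n+1)) = B' n := by
        show _ = G (s (n+1)) (s (n+1+1)) (T z)
        rw [gcyc hG (T z) (s (n+1+1)) (s (n+1)),
          gcyc hG (s (n+1+1)) (s (n+1)) (T z),
          hG.swap_right (s (n+1)) (T z) (s (n+1+1))]
      have hd2 : d (n+1) = G (s (n+1)) (s (n+1+1)) (s (n+1+1)) := hdval _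
      show η - G z (s (n+1)) (s (n+1)) - d (n+1) ≤ B' n
      rw [t4] at t3
      rw [hηdef, hd2]
      linarith
    let c2' : ℕ → ℝ := fun n => max 0 (c2 n)
    have hc2'nneg : ∀ n, 0 ≤ c2' n := fun n => le_max_left _ _
    have hc2'le : ∀ n, c2' n ≤ B' n := fun n => max_le (hB'nneg n) (hB'lb n)
    have hc2tend : Filter.Tendsto c2 atTop (𝓝 η) := by
      have := ((tendsto_const_nhds : Filter.Tendsto (fun _ : ℕ => η) atTop (𝓝 η)).sub
        hzshift).sub (hdtend.comp (tendsto_add_atTop_nat 1))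
      simpa using this
    have hc2'tend : Filter.Tendsto c2' atTop (𝓝 η) := by
      have h1 := (tendsto_const_nhds : Filter.Tendsto (fun _ : ℕ => (0:ℝ)) atTop (𝓝 0)).max hc2tend
      rw [max_eq_right hηpos.le] at h1
      exact h1
    have hψ00 : ψ 0 = 0 := (hψz 0 le_rfl).mpr rfl
    have hψA' : Filter.Tendsto (fun n => ψ (A' n)) atTop (𝓝 0) := by
      have := hψtend A' 0 (fun n => hG.nonneg _ _ _) le_rfl hA'tend
      rwa [hψ00] at this
    have hψc2' : Filter.Tendsto (fun n => ψ (c2' n)) atTop (𝓝 (ψ η)) :=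
      hψtend c2' η hc2'nneg hηpos.le hc2'tend
    have hψηpos : 0 < ψ η := by
      have hne0 : ψ η ≠ 0 := fun h => hηpos.ne' ((hψz η hηpos.le).mp h)
      exact lt_of_le_of_ne (hψ0 η hηpos.le) (Ne.symm hne0)
    have hdiff : Filter.Tendsto (fun n => ψ (A' n) - ψ (c2' n)) atTop (𝓝 (-ψ η)) := by
      have := hψA'.sub hψc2'
      simpa using this
    have hev : ∀ᶠ n in atTop, ψ (A' n) - ψ (c2' n) < 0 :=
      hdiff.eventually_lt_const (by linarith)
    obtain ⟨n, hn⟩ := hev.exists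
    have hk : φ (A' n) ≤ ψ (A' n) - ψ (c2' n) := by
      have h1 : ψ (c2' n) ≤ ψ (B' n) := hψm (hc2'nneg n) (hB'nneg n) (hc2'le n)
      linarith [hc2 n]
    have hφA : 0 ≤ φ (A' n) := hφ0 _ (hG.nonneg _ _ _)
    linarith
end
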